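/- arXiv:2405.20542 — 9 statements merged into one kernel-verified Lean document; each statement's English description precedes it below -/
import Mathlib

section
/- Let X ∈ ℝ_+^{V×D} and let λ_d := Σ_v x_{vd} > 0 for every d. Suppose (W, H) is a global minimizer of D_KL(X‖WH) over the set {(W, H) : every column of W lies in Δ_{V−1}, H ∈ ℝ_+^{K×D}}. Define H̃ by h̃_{kd} = h_{kd}/λ_d. Then every column of H̃ lies in Δ_{K−1}, and (W, H̃) is a global minimizer of D_KL(X‖WH) over the set {(W, H) : every column of W lies in Δ_{V−1} and every column of H lies in Δ_{K−1}}. Conversely, if (W, H) is a global minimizer over the doubly constrained set, then (W, H̃) with h̃_{kd} = λ_d h_{kd} is a global minimizer over the set where only the columns of W are constrained to lie in Δ_{V−1}. -/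
/-- Matrix product `(WH)_{vd} = ∑ k, w_{vk} h_{kd}`. -/
noncomputable def matMul {V K D : ℕ} (W : Fin V → Fin K → ℝ) (H : Fin K → Fin D → ℝ) :
    Fin V → Fin D → ℝ := fun v d => ∑ k, W v k * H k d

/-- A single term `x log(x/y) - x + y` of the generalized Kullback--Leibler divergence,
with the conventions `0 log 0 = 0` and `x log(x/0) = +∞` for `x > 0`. -/
noncomputable def klTerm (x y : ℝ) : EReal :=
  if x = 0 then (y : EReal)
  else if y = 0 then ⊤
  else ((x * Real.log (x / y) - x + y : ℝ) : EReal)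

/-- Generalized Kullback--Leibler divergence `D_KL(X ‖ Y)`. -/
noncomputable def klDiv {V D : ℕ} (X Y : Fin V → Fin D → ℝ) : EReal :=
  ∑ v, ∑ d, klTerm (X v d) (Y v d)

/-!
Rescaling column `d` of `H` by `c_d > 0` rescales column `d` of `WH`; when the columns of `W`
sum to one this changes `D_KL(X ‖ WH)` by the real number `∑_d ((c_d - 1) σ_d - λ_d log c_d)`,
where `σ_d` is the `d`-th column sum of `H`. At a minimizer this is nonnegative for all `c`, and
the first-order condition at `c = 1` gives `σ_d = λ_d`, so `H / λ` is column-stochastic. Both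
directions then compare such rescaling terms: rescaling a column-stochastic `H` by `λ` costs the
same on both sides, and rescaling by any other `s > 0` costs at least as much, because
`λ - λ log λ ≤ s - λ log s`.
-/

open Finset Real

namespace EReal

lemma coe_finset_sum {ι : Type*} (s : Finset ι) (f : ι → ℝ) :
    ((∑ i ∈ s, f i : ℝ) : EReal) = ∑ i ∈ s, (f i : EReal) :=
  map_sum (⟨⟨Real.toEReal, coe_zero⟩, coe_add⟩ : ℝ →+ EReal) f s

lemma finset_sum_ne_bot {ι : Type*} {s : Finset ι} {f : ι → EReal} (h : ∀ i ∈ s, f i ≠ ⊥) :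
    ∑ i ∈ s, f i ≠ ⊥ :=
  sum_induction f (· ≠ ⊥) (fun _ _ ha hb => add_ne_bot_iff.2 ⟨ha, hb⟩) zero_ne_bot h

lemma finset_sum_ne_top {ι : Type*} {s : Finset ι} {f : ι → EReal} (h : ∀ i ∈ s, f i ≠ ⊤) :
    ∑ i ∈ s, f i ≠ ⊤ :=
  sum_induction f (· ≠ ⊤) (fun _ _ => add_ne_top) zero_ne_top h

lemma finset_sum_eq_top_of_mem {ι : Type*} {s : Finset ι} {f : ι → EReal}
    (h : ∀ i ∈ s, f i ≠ ⊥) {i : ι} (hi : i ∈ s) (hi_top : f i = ⊤) : ∑ i ∈ s, f i = ⊤ := by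
  classical
  rw [← add_sum_erase s f hi, hi_top]
  exact top_add_of_ne_bot (finset_sum_ne_bot fun j hj => h j (mem_of_mem_erase hj))

end EReal

lemma eq_of_forall_mul_log_le_sub_one_mul {s l : ℝ}
    (h : ∀ t, 0 < t → l * log t ≤ (t - 1) * s) : s = l := by
  have hmin : IsLocalMin (fun t => (t - 1) * s - l * log t) 1 := by
    filter_upwards [lt_mem_nhds one_pos] with t ht
    simpa using h t ht
  have hderiv : HasDerivAt (fun t => (t - 1) * s - l * log t) (1 * s - l * 1⁻¹) 1 :=
    (((hasDerivAt_id 1).sub_const 1).mul_const s).sub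
      ((hasDerivAt_log one_ne_zero).const_mul l)
  simpa [sub_eq_zero] using hmin.hasDerivAt_eq_zero hderiv

lemma sub_mul_log_le_sub_mul_log {l s : ℝ} (hl : 0 < l) (hs : 0 < s) :
    l - l * log l ≤ s - l * log s := by
  have h := mul_le_mul_of_nonneg_left (log_le_sub_one_of_pos (div_pos hs hl)) hl.le
  rw [log_div hs.ne' hl.ne', mul_sub_one, mul_div_cancel₀ _ hl.ne'] at h
  linarith

lemma klTerm_ne_bot (x y : ℝ) : klTerm x y ≠ ⊥ := by
  unfold klTerm
  split_ifs
  exacts [EReal.coe_ne_bot _, top_ne_bot, EReal.coe_ne_bot _]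

lemma klTerm_ne_top (x : ℝ) {y : ℝ} (hy : y ≠ 0) : klTerm x y ≠ ⊤ := by
  unfold klTerm
  split_ifs <;> exact EReal.coe_ne_top _

lemma klTerm_mul_left {c : ℝ} (hc : c ≠ 0) (x y : ℝ) :
    klTerm x (c * y) = klTerm x y + ((c - 1) * y - x * log c : ℝ) := by
  unfold klTerm
  rcases eq_or_ne x 0 with rfl | hx
  · rw [if_pos rfl, if_pos rfl, zero_mul, sub_zero]
    norm_cast
    ring
  rcases eq_or_ne y 0 with rfl | hy
  · simp only [mul_zero, if_neg hx]
    exact (EReal.top_add_coe _).symm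
  rw [if_neg hx, if_neg hx, if_neg (mul_ne_zero hc hy), if_neg hy,
    log_div hx (mul_ne_zero hc hy), log_div hx hy, log_mul hc hy]
  norm_cast
  ring

section klDiv

variable {V D : ℕ}

lemma klDiv_ne_bot (X Y : Fin V → Fin D → ℝ) : klDiv X Y ≠ ⊥ :=
  EReal.finset_sum_ne_bot fun _ _ => EReal.finset_sum_ne_bot fun _ _ => klTerm_ne_bot _ _

lemma klDiv_ne_top (X : Fin V → Fin D → ℝ) {Y : Fin V → Fin D → ℝ} (hY : ∀ v d, Y v d ≠ 0) :
    klDiv X Y ≠ ⊤ :=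
  EReal.finset_sum_ne_top fun v _ => EReal.finset_sum_ne_top fun d _ => klTerm_ne_top _ (hY v d)

lemma klDiv_eq_top {X Y : Fin V → Fin D → ℝ} {v : Fin V} {d : Fin D} (hX : X v d ≠ 0)
    (hY : Y v d = 0) : klDiv X Y = ⊤ :=
  EReal.finset_sum_eq_top_of_mem
    (fun _ _ => EReal.finset_sum_ne_bot fun _ _ => klTerm_ne_bot _ _) (mem_univ v)
    (EReal.finset_sum_eq_top_of_mem (fun _ _ => klTerm_ne_bot _ _) (mem_univ d)
      (by simp [klTerm, hX, hY]))

lemma klDiv_mul_col (X Y : Fin V → Fin D → ℝ) {c : Fin D → ℝ} (hc : ∀ d, c d ≠ 0) :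
    klDiv X (fun v d => c d * Y v d) =
      klDiv X Y + ((∑ d, ((c d - 1) * ∑ v, Y v d - (∑ v, X v d) * log (c d)) : ℝ) : EReal) := by
  simp only [klDiv, klTerm_mul_left (hc _), sum_add_distrib, ← EReal.coe_finset_sum]
  congr 2
  rw [sum_comm]
  simp only [sum_sub_distrib, mul_sum, sum_mul]

end klDiv

section matMul

variable {V K D : ℕ}

lemma matMul_mul_col (W : Fin V → Fin K → ℝ) (H : Fin K → Fin D → ℝ) (c : Fin D → ℝ) :
    matMul W (fun k d => c d * H k d) = fun v d => c d * matMul W H v d := by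
  ext v d
  simp only [matMul, mul_sum]
  exact sum_congr rfl fun _ _ => mul_left_comm _ _ _

lemma sum_matMul_of_sum_eq_one {W : Fin V → Fin K → ℝ} (hW : ∀ k, ∑ v, W v k = 1)
    (H : Fin K → Fin D → ℝ) (d : Fin D) : ∑ v, matMul W H v d = ∑ k, H k d := by
  simp only [matMul]
  rw [sum_comm]
  simp only [← sum_mul, hW, one_mul]

lemma klDiv_matMul_mul_col (X : Fin V → Fin D → ℝ) {W : Fin V → Fin K → ℝ}
    (hW : ∀ k, ∑ v, W v k = 1) (H : Fin K → Fin D → ℝ) {c : Fin D → ℝ} (hc : ∀ d, c d ≠ 0) :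
    klDiv X (matMul W fun k d => c d * H k d) =
      klDiv X (matMul W H) +
        ((∑ d, ((c d - 1) * ∑ k, H k d - (∑ v, X v d) * log (c d)) : ℝ) : EReal) := by
  rw [matMul_mul_col, klDiv_mul_col X _ hc]
  simp only [sum_matMul_of_sum_eq_one hW]

lemma klDiv_matMul_mul_col_of_sum_eq_one (X : Fin V → Fin D → ℝ) {W : Fin V → Fin K → ℝ}
    (hW : ∀ k, ∑ v, W v k = 1) {H : Fin K → Fin D → ℝ} (hH : ∀ d, ∑ k, H k d = 1)
    {c : Fin D → ℝ} (hc : ∀ d, c d ≠ 0) :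
    klDiv X (matMul W fun k d => c d * H k d) =
      klDiv X (matMul W H) + ((∑ d, (c d - 1 - (∑ v, X v d) * log (c d)) : ℝ) : EReal) := by
  simp only [klDiv_matMul_mul_col X hW H hc, hH, mul_one]

lemma klDiv_matMul_ne_top_of_isMin (X : Fin V → Fin D → ℝ) (hK : 0 < K)
    {W : Fin V → Fin K → ℝ} (hW : ∀ k, ∑ v, W v k = 1) {H : Fin K → Fin D → ℝ}
    (hmin : ∀ (W' : Fin V → Fin K → ℝ) (H' : Fin K → Fin D → ℝ),
      (∀ v k, 0 ≤ W' v k) → (∀ k, ∑ v, W' v k = 1) → (∀ k d, 0 ≤ H' k d) →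
        klDiv X (matMul W H) ≤ klDiv X (matMul W' H')) :
    klDiv X (matMul W H) ≠ ⊤ := by
  have hV : (V : ℝ) ≠ 0 := by
    rintro hV
    obtain rfl : V = 0 := by exact_mod_cast hV
    simpa using hW ⟨0, hK⟩
  refine ne_top_of_le_ne_top (klDiv_ne_top X fun v d => ?_)
    (hmin (fun _ _ => (V : ℝ)⁻¹) (fun _ _ => 1) (fun _ _ => by positivity)
      (fun _ => by simp [hV]) fun _ _ => zero_le_one)
  simp [matMul, hV, hK.ne']

lemma sum_col_eq_of_isMin (X : Fin V → Fin D → ℝ) {W : Fin V → Fin K → ℝ}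
    (hW : ∀ k, ∑ v, W v k = 1) {H : Fin K → Fin D → ℝ} (hH : ∀ k d, 0 ≤ H k d)
    (hfin : klDiv X (matMul W H) ≠ ⊤)
    (hmin : ∀ H' : Fin K → Fin D → ℝ, (∀ k d, 0 ≤ H' k d) →
      klDiv X (matMul W H) ≤ klDiv X (matMul W H')) (d : Fin D) :
    ∑ k, H k d = ∑ v, X v d := by
  refine eq_of_forall_mul_log_le_sub_one_mul fun t ht => ?_
  let c : Fin D → ℝ := Function.update 1 d t
  have hc_pos : ∀ d', 0 < c d' := by
    intro d'
    rcases eq_or_ne d' d with rfl | hd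
    · simpa [c] using ht
    · simp [c, hd]
  have h := hmin _ fun k d' => mul_nonneg (hc_pos d').le (hH k d')
  rw [klDiv_matMul_mul_col X hW H fun d' => (hc_pos d').ne',
    sum_eq_single d (fun d' _ hd => by simp [c, hd]) (by simp)] at h
  lift klDiv X (matMul W H) to ℝ using ⟨hfin, klDiv_ne_bot _ _⟩ with a
  norm_cast at h
  simp only [c, Function.update_self] at h
  linarith

lemma klDiv_matMul_mul_col_le_iff (X : Fin V → Fin D → ℝ) {W W' : Fin V → Fin K → ℝ}
    (hW : ∀ k, ∑ v, W v k = 1) (hW' : ∀ k, ∑ v, W' v k = 1) {H H' : Fin K → Fin D → ℝ}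
    (hH : ∀ d, ∑ k, H k d = 1) (hH' : ∀ d, ∑ k, H' k d = 1) {c : Fin D → ℝ}
    (hc : ∀ d, c d ≠ 0) :
    klDiv X (matMul W fun k d => c d * H k d) ≤ klDiv X (matMul W' fun k d => c d * H' k d) ↔
      klDiv X (matMul W H) ≤ klDiv X (matMul W' H') := by
  rw [klDiv_matMul_mul_col_of_sum_eq_one X hW hH hc,
    klDiv_matMul_mul_col_of_sum_eq_one X hW' hH' hc]
  exact (EReal.addLECancellable_coe _).add_le_add_iff_right

lemma klDiv_matMul_rescale_to_col_sum_le (X : Fin V → Fin D → ℝ) (hX : ∀ d, 0 < ∑ v, X v d)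
    {W : Fin V → Fin K → ℝ} (hW : ∀ k, ∑ v, W v k = 1) {H : Fin K → Fin D → ℝ}
    (hH : ∀ d, 0 < ∑ k, H k d) :
    klDiv X (matMul W fun k d => (∑ v, X v d) * (H k d / ∑ k', H k' d)) ≤
      klDiv X (matMul W H) := by
  have hnorm : ∀ d, ∑ k, H k d / ∑ k', H k' d = 1 := fun d => by
    rw [← sum_div, div_self (hH d).ne']
  have hH_eq : H = fun k d => (∑ k', H k' d) * (H k d / ∑ k', H k' d) := by
    ext k d
    rw [mul_div_cancel₀ _ (hH d).ne']
  calc _ = klDiv X (matMul W fun k d => H k d / ∑ k', H k' d) +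
        ((∑ d, ((∑ v, X v d) - 1 - (∑ v, X v d) * log (∑ v, X v d)) : ℝ) : EReal) :=
        klDiv_matMul_mul_col_of_sum_eq_one X hW hnorm fun d => (hX d).ne'
    _ ≤ klDiv X (matMul W fun k d => H k d / ∑ k', H k' d) +
        ((∑ d, ((∑ k, H k d) - 1 - (∑ v, X v d) * log (∑ k, H k d)) : ℝ) : EReal) :=
        add_le_add_right (EReal.coe_le_coe_iff.2 <| sum_le_sum fun d _ => by
          linarith [sub_mul_log_le_sub_mul_log (hX d) (hH d)]) _
    _ = klDiv X (matMul W H) := by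
        rw [← klDiv_matMul_mul_col_of_sum_eq_one X hW hnorm fun d => (hH d).ne', ← hH_eq]

lemma sum_col_pos_of_klDiv_matMul_ne_top {X : Fin V → Fin D → ℝ} {W : Fin V → Fin K → ℝ}
    {H : Fin K → Fin D → ℝ} (hH : ∀ k d, 0 ≤ H k d) (hfin : klDiv X (matMul W H) ≠ ⊤)
    {d : Fin D} (hX : ∑ v, X v d ≠ 0) : 0 < ∑ k, H k d := by
  refine (sum_nonneg fun k _ => hH k d).lt_of_ne' fun hd => hfin ?_
  obtain ⟨v, -, hv⟩ := exists_ne_zero_of_sum_ne_zero hX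
  refine klDiv_eq_top hv (sum_eq_zero fun k _ => ?_)
  rw [(sum_eq_zero_iff_of_nonneg fun k _ => hH k d).1 hd k (mem_univ k), mul_zero]

end matMul

theorem nmf_normalizedWH_equivalence_general {V K D : ℕ} (hK : 0 < K)
    (X : Fin V → Fin D → ℝ)
    (hlam : ∀ d, 0 < ∑ v, X v d) :
    -- Forward direction: from a minimizer with only the columns of W constrained,
    -- dividing the columns of H by λ_d gives a minimizer of the doubly constrained problem.
    (∀ (W : Fin V → Fin K → ℝ) (H : Fin K → Fin D → ℝ),
      (∀ v k, 0 ≤ W v k) → (∀ k, (∑ v, W v k) = 1) → (∀ k d, 0 ≤ H k d) →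
      (∀ (W' : Fin V → Fin K → ℝ) (H' : Fin K → Fin D → ℝ),
        (∀ v k, 0 ≤ W' v k) → (∀ k, (∑ v, W' v k) = 1) → (∀ k d, 0 ≤ H' k d) →
        klDiv X (matMul W H) ≤ klDiv X (matMul W' H')) →
      -- every column of H̃ lies in the simplex Δ_{K-1}
      ((∀ k d, 0 ≤ H k d / ∑ v, X v d) ∧ (∀ d, (∑ k, H k d / ∑ v, X v d) = 1) ∧
      -- (W, H̃) is a global minimizer of the doubly constrained problem
      (∀ (W' : Fin V → Fin K → ℝ) (H' : Fin K → Fin D → ℝ),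
        (∀ v k, 0 ≤ W' v k) → (∀ k, (∑ v, W' v k) = 1) →
        (∀ k d, 0 ≤ H' k d) → (∀ d, (∑ k, H' k d) = 1) →
        klDiv X (matMul W (fun k d => H k d / ∑ v, X v d))
          ≤ klDiv X (matMul W' H')))) ∧
    -- Converse direction: from a minimizer of the doubly constrained problem,
    -- multiplying the columns of H by λ_d gives a minimizer of the problem where
    -- only the columns of W are constrained.
    (∀ (W : Fin V → Fin K → ℝ) (H : Fin K → Fin D → ℝ),
      (∀ v k, 0 ≤ W v k) → (∀ k, (∑ v, W v k) = 1) →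
      (∀ k d, 0 ≤ H k d) → (∀ d, (∑ k, H k d) = 1) →
      (∀ (W' : Fin V → Fin K → ℝ) (H' : Fin K → Fin D → ℝ),
        (∀ v k, 0 ≤ W' v k) → (∀ k, (∑ v, W' v k) = 1) →
        (∀ k d, 0 ≤ H' k d) → (∀ d, (∑ k, H' k d) = 1) →
        klDiv X (matMul W H) ≤ klDiv X (matMul W' H')) →
      (∀ (W' : Fin V → Fin K → ℝ) (H' : Fin K → Fin D → ℝ),
        (∀ v k, 0 ≤ W' v k) → (∀ k, (∑ v, W' v k) = 1) → (∀ k d, 0 ≤ H' k d) →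
        klDiv X (matMul W (fun k d => (∑ v, X v d) * H k d))
          ≤ klDiv X (matMul W' H'))) := by
  constructor
  · intro W H hW0 hW1 hH hmin
    have hsum : ∀ d, ∑ k, H k d = ∑ v, X v d :=
      sum_col_eq_of_isMin X hW1 hH (klDiv_matMul_ne_top_of_isMin X hK hW1 hmin)
        fun H' hH' => hmin W H' hW0 hW1 hH'
    have hnorm : ∀ d, ∑ k, H k d / ∑ v, X v d = 1 := fun d => by
      rw [← sum_div, hsum, div_self (hlam d).ne']
    refine ⟨fun k d => div_nonneg (hH k d) (hlam d).le, hnorm, fun W' H' hW0' hW1' hH0' hH1' => ?_⟩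
    have hH_eq : H = fun k d => (∑ v, X v d) * (H k d / ∑ v, X v d) := by
      ext k d
      rw [mul_div_cancel₀ _ (hlam d).ne']
    rw [← klDiv_matMul_mul_col_le_iff X hW1 hW1' hnorm hH1' fun d => (hlam d).ne', ← hH_eq]
    exact hmin W' _ hW0' hW1' fun k d => mul_nonneg (hlam d).le (hH0' k d)
  · intro W H _ hW1 _ hH1 hmin W' H' hW0' hW1' hH0'
    rcases eq_or_ne (klDiv X (matMul W' H')) ⊤ with htop | hfin
    · exact htop ▸ le_top
    have hpos : ∀ d, 0 < ∑ k, H' k d := fun d =>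
      sum_col_pos_of_klDiv_matMul_ne_top hH0' hfin (hlam d).ne'
    have hnorm : ∀ d, ∑ k, H' k d / ∑ k', H' k' d = 1 := fun d => by
      rw [← sum_div, div_self (hpos d).ne']
    refine le_trans ?_ (klDiv_matMul_rescale_to_col_sum_le X hlam hW1' hpos)
    rw [klDiv_matMul_mul_col_le_iff X hW1 hW1' hH1 hnorm fun d => (hlam d).ne']
    exact hmin W' _ hW0' hW1' (fun k d => div_nonneg (hH0' k d) (hpos d).le) hnorm

theorem nmf_normalizedWH_equivalence {V K D : ℕ} (hK : 0 < K)
    (X : Fin V → Fin D → ℝ) (hX : ∀ v d, 0 ≤ X v d)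
    (hlam : ∀ d, 0 < ∑ v, X v d) :
    -- Forward direction: from a minimizer with only the columns of W constrained,
    -- dividing the columns of H by λ_d gives a minimizer of the doubly constrained problem.
    (∀ (W : Fin V → Fin K → ℝ) (H : Fin K → Fin D → ℝ),
      (∀ v k, 0 ≤ W v k) → (∀ k, (∑ v, W v k) = 1) → (∀ k d, 0 ≤ H k d) →
      (∀ (W' : Fin V → Fin K → ℝ) (H' : Fin K → Fin D → ℝ),
        (∀ v k, 0 ≤ W' v k) → (∀ k, (∑ v, W' v k) = 1) → (∀ k d, 0 ≤ H' k d) →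
        klDiv X (matMul W H) ≤ klDiv X (matMul W' H')) →
      -- every column of H̃ lies in the simplex Δ_{K-1}
      ((∀ k d, 0 ≤ H k d / ∑ v, X v d) ∧ (∀ d, (∑ k, H k d / ∑ v, X v d) = 1) ∧
      -- (W, H̃) is a global minimizer of the doubly constrained problem
      (∀ (W' : Fin V → Fin K → ℝ) (H' : Fin K → Fin D → ℝ),
        (∀ v k, 0 ≤ W' v k) → (∀ k, (∑ v, W' v k) = 1) →
        (∀ k d, 0 ≤ H' k d) → (∀ d, (∑ k, H' k d) = 1) →
        klDiv X (matMul W (fun k d => H k d / ∑ v, X v d))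
          ≤ klDiv X (matMul W' H')))) ∧
    -- Converse direction: from a minimizer of the doubly constrained problem,
    -- multiplying the columns of H by λ_d gives a minimizer of the problem where
    -- only the columns of W are constrained.
    (∀ (W : Fin V → Fin K → ℝ) (H : Fin K → Fin D → ℝ),
      (∀ v k, 0 ≤ W v k) → (∀ k, (∑ v, W v k) = 1) →
      (∀ k d, 0 ≤ H k d) → (∀ d, (∑ k, H k d) = 1) →
      (∀ (W' : Fin V → Fin K → ℝ) (H' : Fin K → Fin D → ℝ),
        (∀ v k, 0 ≤ W' v k) → (∀ k, (∑ v, W' v k) = 1) →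
        (∀ k d, 0 ≤ H' k d) → (∀ d, (∑ k, H' k d) = 1) →
        klDiv X (matMul W H) ≤ klDiv X (matMul W' H')) →
      (∀ (W' : Fin V → Fin K → ℝ) (H' : Fin K → Fin D → ℝ),
        (∀ v k, 0 ≤ W' v k) → (∀ k, (∑ v, W' v k) = 1) → (∀ k d, 0 ≤ H' k d) →
        klDiv X (matMul W (fun k d => (∑ v, X v d) * H k d))
          ≤ klDiv X (matMul W' H'))) :=
  nmf_normalizedWH_equivalence_general hK X hlam
end

section
/- Fix indices v, d. Let W′ ∈ ℝ^{V×K} and H′ ∈ ℝ^{K×D} have strictly positive entries, and define φ′_{vkd} = w′_{vk} h′_{kd} / (W′H′)_{vd}. Then for all W ∈ ℝ^{V×K} and H ∈ ℝ^{K×D} with strictly positive entries, −log((WH)_{vd}) ≤ −Σ_k φ′_{vkd} log(w_{vk} h_{kd} / φ′_{vkd}), with equality when (W, H) = (W′, H′). In other words, G((W,H),(W′,H′)) = −Σ_k φ′_{vkd} log(w_{vk} h_{kd} / φ′_{vkd}) is an auxiliary function of F(W,H) = −log((WH)_{vd}) on positive matrix pairs. -/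
/-- For fixed indices `v, d`, the function
`G((W,H),(W',H')) = -∑ k, φ'_{vkd} log (w_{vk} h_{kd} / φ'_{vkd})` with
`φ'_{vkd} = w'_{vk} h'_{kd} / (W'H')_{vd}` is an auxiliary function of
`F(W,H) = -log (WH)_{vd}` on pairs of strictly positive matrices: it majorizes `F`
everywhere and coincides with `F` on the diagonal. -/
theorem auxiliary_function_single_entry {V K D : ℕ} (v : Fin V) (d : Fin D)
    (W' : Fin V → Fin K → ℝ) (H' : Fin K → Fin D → ℝ)
    (hW' : ∀ v k, 0 < W' v k) (hH' : ∀ k d, 0 < H' k d) :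
    (∀ (W : Fin V → Fin K → ℝ) (H : Fin K → Fin D → ℝ),
      (∀ v k, 0 < W v k) → (∀ k d, 0 < H k d) →
      -Real.log (matMul W H v d) ≤
        -∑ k, (W' v k * H' k d / matMul W' H' v d) *
          Real.log (W v k * H k d / (W' v k * H' k d / matMul W' H' v d))) ∧
    (-Real.log (matMul W' H' v d) =
      -∑ k, (W' v k * H' k d / matMul W' H' v d) *
        Real.log (W' v k * H' k d / (W' v k * H' k d / matMul W' H' v d))) := by
  rcases Nat.eq_zero_or_pos K with hK | hK
  · subst hK
    simp [matMul]
  set s := matMul W' H' v d with hs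
  have hs_pos : 0 < s := Finset.sum_pos (fun k _ => mul_pos (hW' v k) (hH' k d)) (by
    simpa using Finset.univ_nonempty_iff.mpr ⟨⟨0, hK⟩⟩)
  have hφpos : ∀ k : Fin K, 0 < W' v k * H' k d / s :=
    fun k => div_pos (mul_pos (hW' v k) (hH' k d)) hs_pos
  have hφsum : ∑ k, W' v k * H' k d / s = 1 := by
    rw [← Finset.sum_div]
    exact div_self hs_pos.ne'
  constructor
  · intro W H hW hH
    rw [neg_le_neg_iff]
    have := strictConcaveOn_log_Ioi.concaveOn.le_map_sum (t := Finset.univ)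
      (w := fun k => W' v k * H' k d / s)
      (p := fun k => W v k * H k d / (W' v k * H' k d / s))
      (fun k _ => (hφpos k).le) hφsum
      (fun k _ => Set.mem_Ioi.mpr (div_pos (mul_pos (hW v k) (hH k d)) (hφpos k)))
    refine le_trans (by simpa using this) (le_of_eq ?_)
    congr 1
    rw [show matMul W H v d = ∑ k, W v k * H k d from rfl]
    refine Finset.sum_congr rfl fun k _ => ?_
    rw [mul_comm, div_mul_cancel₀ _ (hφpos k).ne']
  · congr 1
    have : ∀ k : Fin K, (W' v k * H' k d / s) *
        Real.log (W' v k * H' k d / (W' v k * H' k d / s)) =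
        (W' v k * H' k d / s) * Real.log s := by
      intro k
      congr 1
      rw [div_div_eq_mul_div, mul_comm, mul_div_assoc,
        div_self (mul_pos (hW' v k) (hH' k d)).ne', mul_one]
    rw [Finset.sum_congr rfl (fun k _ => this k), ← Finset.sum_mul, hφsum, one_mul]
end

section
/- Let x ∈ ℝ^{V×D} and φ ∈ ℝ^{V×K×D} satisfy x_{vd} φ_{vkd} > 0 for all v, k, d. Consider the function f(W, H) = −Σ_{v,k,d} x_{vd} φ_{vkd} log(w_{vk} h_{kd}) + Σ_{k,d} h_{kd} on pairs (W, H) where W ∈ ℝ^{V×K} has strictly positive entries with every column in Δ_{V−1} and H ∈ ℝ^{K×D} has strictly positive entries. Define W* by w*_{vk} = (Σ_d x_{vd} φ_{vkd}) / (Σ_{v′,d} x_{v′d} φ_{v′kd}) and H* by h*_{kd} = Σ_v x_{vd} φ_{vkd}. Then every column of W* lies in Δ_{V−1}, H* has strictly positive entries, and f(W*, H*) ≤ f(W, H) for every admissible pair (W, H). -/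
/-!
After `log (w * h) = log w + log h` the objective splits into a part depending only on `W`
and a part depending only on `H`. Column by column, the `W`-part is minus a cross-entropy
`∑ᵥ aᵥ log wᵥ`, which Gibbs' inequality maximizes over the simplex at `w = a / ∑ a`; the `H`-part
is a sum of the one-variable functions `h ↦ h - b log h`, minimal at `h = b`. Both facts are the
nonnegativity of `y * klFun (x / y) = x log (x / y) + y - x`.
-/

open Finset Real InformationTheory

theorem mul_log_sub_le_mul_log_sub {b h : ℝ} (hb : 0 ≤ b) (hh : 0 < h) :
    b * log h - h ≤ b * log b - b := by
  rcases hb.eq_or_lt with rfl | hb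
  · simpa using hh.le
  have key := mul_nonneg hh.le (klFun_nonneg (div_pos hb hh).le)
  rw [klFun, log_div hb.ne' hh.ne'] at key
  field_simp at key
  linarith

section

variable {ι κ δ : Type*} [Fintype ι] [Fintype κ] [Fintype δ]

theorem sum_mul_log_le_sum_mul_log {q p : ι → ℝ} (hq : ∀ i, 0 ≤ q i) (hp : ∀ i, 0 < p i)
    (hpq : ∑ i, p i ≤ ∑ i, q i) : ∑ i, q i * log (p i) ≤ ∑ i, q i * log (q i) := by
  have := sum_le_sum fun i (_ : i ∈ univ) => mul_log_sub_le_mul_log_sub (hq i) (hp i)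
  simp only [sum_sub_distrib] at this
  linarith

theorem sum_mul_log_le_sum_mul_log_div_sum {a p : ι → ℝ} (ha : ∀ i, 0 ≤ a i)
    (hp : ∀ i, 0 < p i) (hp1 : ∑ i, p i = 1) :
    ∑ i, a i * log (p i) ≤ ∑ i, a i * log (a i / ∑ j, a j) := by
  set A := ∑ j, a j
  rcases (sum_nonneg fun i (_ : i ∈ univ) => ha i).eq_or_lt with hA | hA
  · simp [(sum_eq_zero_iff_of_nonneg fun i _ => ha i).1 hA.symm]
  have hq1 : ∑ i, a i / A = 1 := by rw [← sum_div, div_self hA.ne']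
  have := sum_mul_log_le_sum_mul_log (fun i => div_nonneg (ha i) hA.le) hp
    (hp1.trans hq1.symm).le
  simp only [div_mul_eq_mul_div, ← sum_div] at this
  exact (div_le_div_iff_of_pos_right hA).1 this

theorem sum_mul_log_mul_eq (c : ι → κ → δ → ℝ) {W : ι → κ → ℝ} {H : κ → δ → ℝ}
    (hW : ∀ i k, W i k ≠ 0) (hH : ∀ k d, H k d ≠ 0) :
    ∑ i, ∑ k, ∑ d, c i k d * log (W i k * H k d) =
      ∑ k, ∑ i, (∑ d, c i k d) * log (W i k) + ∑ k, ∑ d, (∑ i, c i k d) * log (H k d) := by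
  simp only [log_mul (hW _ _) (hH _ _), mul_add, sum_add_distrib, sum_mul]
  rw [sum_comm]
  congr 1
  rw [sum_comm]
  exact sum_congr rfl fun k _ => sum_comm

end

/-- Constrained joint minimization of the auxiliary function
`f(W,H) = -∑_{v,k,d} x_{vd} φ_{vkd} log(w_{vk} h_{kd}) + ∑_{k,d} h_{kd}`
over pairs `(W,H)` with strictly positive entries and the columns of `W` in the simplex:
the joint multiplicative updates `w*_{vk} ∝ ∑_d x_{vd} φ_{vkd}`,
`h*_{kd} = ∑_v x_{vd} φ_{vkd}` give its exact constrained minimizer. -/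
theorem joint_aux_constrained_minimizer {V K D : ℕ} (hV : 0 < V) (hD : 0 < D)
    (x : Fin V → Fin D → ℝ) (φ : Fin V → Fin K → Fin D → ℝ)
    (hpos : ∀ v k d, 0 < x v d * φ v k d) :
    let f : (Fin V → Fin K → ℝ) → (Fin K → Fin D → ℝ) → ℝ := fun W H =>
      -(∑ v, ∑ k, ∑ d, x v d * φ v k d * Real.log (W v k * H k d)) + ∑ k, ∑ d, H k d
    let Wstar : Fin V → Fin K → ℝ := fun v k =>
      (∑ d, x v d * φ v k d) / (∑ v', ∑ d, x v' d * φ v' k d)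
    let Hstar : Fin K → Fin D → ℝ := fun k d => ∑ v, x v d * φ v k d
    -- every column of W* lies in the simplex Δ_{V-1}
    ((∀ v k, 0 ≤ Wstar v k) ∧ (∀ k, (∑ v, Wstar v k) = 1)) ∧
    -- H* has strictly positive entries
    (∀ k d, 0 < Hstar k d) ∧
    -- (W*, H*) minimizes f over the admissible set
    (∀ (W : Fin V → Fin K → ℝ) (H : Fin K → Fin D → ℝ),
      (∀ v k, 0 < W v k) → (∀ k, (∑ v, W v k) = 1) → (∀ k d, 0 < H k d) →
      f Wstar Hstar ≤ f W H) := by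
  intro f Wstar Hstar
  have : Nonempty (Fin V) := Fin.pos_iff_nonempty.1 hV
  have : Nonempty (Fin D) := Fin.pos_iff_nonempty.1 hD
  have hW_num : ∀ v k, 0 < ∑ d, x v d * φ v k d := fun v k =>
    sum_pos (fun d _ => hpos v k d) univ_nonempty
  have hW_den : ∀ k, 0 < ∑ v, ∑ d, x v d * φ v k d := fun k =>
    sum_pos (fun v _ => hW_num v k) univ_nonempty
  have hWstar : ∀ v k, 0 < Wstar v k := fun v k => div_pos (hW_num v k) (hW_den k)
  have hHstar : ∀ k d, 0 < Hstar k d := fun k d => sum_pos (fun v _ => hpos v k d) univ_nonempty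
  refine ⟨⟨fun v k => (hWstar v k).le,
    fun k => by simp only [Wstar, ← sum_div, div_self (hW_den k).ne']⟩, hHstar, ?_⟩
  intro W H hW hW1 hH
  have hW_part : ∀ k, ∑ v, (∑ d, x v d * φ v k d) * log (W v k) ≤
      ∑ v, (∑ d, x v d * φ v k d) * log (Wstar v k) := fun k =>
    sum_mul_log_le_sum_mul_log_div_sum (fun v => (hW_num v k).le) (fun v => hW v k) (hW1 k)
  have hH_part : ∀ k d,
      Hstar k d * log (H k d) - H k d ≤ Hstar k d * log (Hstar k d) - Hstar k d :=
    fun k d => mul_log_sub_le_mul_log_sub (hHstar k d).le (hH k d)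
  simp only [f, sum_mul_log_mul_eq _ (fun v k => (hW v k).ne') (fun k d => (hH k d).ne'),
    sum_mul_log_mul_eq _ (fun v k => (hWstar v k).ne') (fun k d => (hHstar k d).ne')]
  have hW_sum := sum_le_sum fun k (_ : k ∈ univ) => hW_part k
  have hH_sum := sum_le_sum fun k (_ : k ∈ univ) => sum_le_sum fun d (_ : d ∈ univ) => hH_part k d
  simp only [sum_sub_distrib] at hH_sum
  linarith
end

section
/- Let X ∈ ℝ^{V×D} have strictly positive entries and let λ_d = Σ_v x_{vd}. Let W^{(0)} ∈ ℝ^{V×K} have strictly positive entries with every column in Δ_{V−1} and H^{(0)} ∈ ℝ^{K×D} have strictly positive entries with every column in Δ_{K−1}. Define the NMF sequence (W^{(n),NMF}, H^{(n),NMF}) recursively by w^{(n+1)}_{vk} = (w^{(n)}_{vk} Σ_d x_{vd} h^{(n)}_{kd}/(W^{(n)}H^{(n)})_{vd}) / (Σ_{v′} w^{(n)}_{v′k} Σ_d x_{v′d} h^{(n)}_{kd}/(W^{(n)}H^{(n)})_{v′d}) and h^{(n+1)}_{kd} = h^{(n)}_{kd} Σ_v x_{vd} w^{(n)}_{vk}/(W^{(n)}H^{(n)})_{vd},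 and define the PLSA sequence (W^{(n),PLSA}, H^{(n),PLSA}) recursively by the same W-update together with h^{(n+1)}_{kd} = (h^{(n)}_{kd} Σ_v x_{vd} w^{(n)}_{vk}/(W^{(n)}H^{(n)})_{vd}) / (Σ_{k′} h^{(n)}_{k′d} Σ_v x_{vd} w^{(n)}_{vk′}/(W^{(n)}H^{(n)})_{vd}), both from the same initialization (W^{(0)}, H^{(0)}). Then for all n ≥ 1: W^{(n),NMF} = W^{(n),PLSA}; h^{(n),NMF}_{kd} = λ_d · h^{(n),PLSA}_{kd} for all k, d; and Σ_k h^{(n),NMF}_{kd} = λ_d for all d. -/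
/-- The NMF iterates (Algorithm 3) and the PLSA iterates (Algorithm 5), started from the
same normalized initialization, satisfy for all `n ≥ 1`:
`W^{(n),NMF} = W^{(n),PLSA}`, `h^{(n),NMF}_{kd} = λ_d h^{(n),PLSA}_{kd}`, and
`∑_k h^{(n),NMF}_{kd} = λ_d` where `λ_d = ∑_v x_{vd}`. -/
theorem nmf_plsa_iterates {V K D : ℕ}
    (X : Fin V → Fin D → ℝ) (hX : ∀ v d, 0 < X v d)
    (W0 : Fin V → Fin K → ℝ) (H0 : Fin K → Fin D → ℝ)
    (hW0pos : ∀ v k, 0 < W0 v k) (hW0sum : ∀ k, (∑ v, W0 v k) = 1)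
    (hH0pos : ∀ k d, 0 < H0 k d) (hH0sum : ∀ d, (∑ k, H0 k d) = 1)
    (WN : ℕ → Fin V → Fin K → ℝ) (HN : ℕ → Fin K → Fin D → ℝ)
    (WP : ℕ → Fin V → Fin K → ℝ) (HP : ℕ → Fin K → Fin D → ℝ)
    (hWN0 : WN 0 = W0) (hHN0 : HN 0 = H0) (hWP0 : WP 0 = W0) (hHP0 : HP 0 = H0)
    (hWNrec : ∀ n v k, WN (n + 1) v k =
      (WN n v k * (∑ d, X v d * HN n k d / matMul (WN n) (HN n) v d)) /
        (∑ v', WN n v' k * (∑ d, X v' d * HN n k d / matMul (WN n) (HN n) v' d)))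
    (hHNrec : ∀ n k d, HN (n + 1) k d =
      HN n k d * (∑ v, X v d * WN n v k / matMul (WN n) (HN n) v d))
    (hWPrec : ∀ n v k, WP (n + 1) v k =
      (WP n v k * (∑ d, X v d * HP n k d / matMul (WP n) (HP n) v d)) /
        (∑ v', WP n v' k * (∑ d, X v' d * HP n k d / matMul (WP n) (HP n) v' d)))
    (hHPrec : ∀ n k d, HP (n + 1) k d =
      (HP n k d * (∑ v, X v d * WP n v k / matMul (WP n) (HP n) v d)) /
        (∑ k', HP n k' d * (∑ v, X v d * WP n v k' / matMul (WP n) (HP n) v d))) :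
    ∀ n, 1 ≤ n →
      WN n = WP n ∧
      (∀ k d, HN n k d = (∑ v, X v d) * HP n k d) ∧
      (∀ d, (∑ k, HN n k d) = ∑ v, X v d) := by
  rcases Nat.eq_zero_or_pos D with hD | hD
  · subst hD
    intro n hn
    obtain ⟨m, rfl⟩ : ∃ m, n = m + 1 := ⟨n - 1, by omega⟩
    refine ⟨?_, fun k d => d.elim0, fun d => d.elim0⟩
    funext v k
    rw [hWNrec, hWPrec]
    simp
  rcases Nat.eq_zero_or_pos V with hV | hV
  · subst hV
    intro n hn
    obtain ⟨m, rfl⟩ : ∃ m, n = m + 1 := ⟨n - 1, by omega⟩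
    refine ⟨funext fun v => v.elim0, fun k d => ?_, fun d => ?_⟩
    · rw [hHNrec]; simp
    · simp [hHNrec]
  have hK : 0 < K := by
    rcases Nat.eq_zero_or_pos K with h | h
    · subst h
      have := hH0sum ⟨0, hD⟩
      simp at this
    · exact h
  haveI : Nonempty (Fin V) := ⟨⟨0, hV⟩⟩
  haveI : Nonempty (Fin D) := ⟨⟨0, hD⟩⟩
  haveI : Nonempty (Fin K) := ⟨⟨0, hK⟩⟩
  have hlampos : ∀ d, 0 < ∑ v, X v d := fun d =>
    Finset.sum_pos (fun v _ => hX v d) Finset.univ_nonempty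
  have step : ∀ n, WN n = WP n → (∀ v k, 0 < WN n v k) → (∀ k d, 0 < HP n k d) →
      (∀ d, (∑ k, HP n k d) = 1) → ∀ c : Fin D → ℝ, (∀ d, 0 < c d) →
      (∀ k d, HN n k d = c d * HP n k d) →
      (WN (n+1) = WP (n+1)) ∧ (∀ v k, 0 < WN (n+1) v k) ∧ (∀ k d, 0 < HP (n+1) k d) ∧
      (∀ d, (∑ k, HP (n+1) k d) = 1) ∧
      (∀ k d, HN (n+1) k d = (∑ v, X v d) * HP (n+1) k d) ∧
      (∀ d, (∑ k, HN (n+1) k d) = ∑ v, X v d) := by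
    intro n hWeq hWpos hHPpos hHPsum c hcpos hc
    have hWPpos : ∀ v k, 0 < WP n v k := fun v k => hWeq ▸ hWpos v k
    have hMpos : ∀ v d, 0 < matMul (WP n) (HP n) v d := fun v d =>
      Finset.sum_pos (fun k _ => mul_pos (hWPpos v k) (hHPpos k d)) Finset.univ_nonempty
    have hMN : ∀ v d, matMul (WN n) (HN n) v d = c d * matMul (WP n) (HP n) v d := by
      intro v d
      unfold matMul
      rw [Finset.mul_sum]
      refine Finset.sum_congr rfl fun k _ => ?_
      rw [hWeq, hc]
      ring
    have hterm : ∀ v k,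
        (∑ d, X v d * HN n k d / matMul (WN n) (HN n) v d)
          = ∑ d, X v d * HP n k d / matMul (WP n) (HP n) v d := by
      intro v k
      refine Finset.sum_congr rfl fun d _ => ?_
      rw [hc, hMN,
        show X v d * (c d * HP n k d) = c d * (X v d * HP n k d) by ring,
        mul_div_mul_left _ _ (ne_of_gt (hcpos d))]
    have hSpos : ∀ v k, 0 < ∑ d, X v d * HP n k d / matMul (WP n) (HP n) v d := fun v k =>
      Finset.sum_pos (fun d _ => div_pos (mul_pos (hX v d) (hHPpos k d)) (hMpos v d))
        Finset.univ_nonempty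
    have hWnew : WN (n+1) = WP (n+1) := by
      funext v k
      rw [hWNrec, hWPrec]
      simp only [hterm]
      simp only [hWeq]
    have hWposN : ∀ v k, 0 < WN (n+1) v k := by
      intro v k
      rw [hWNrec]
      simp only [hterm]
      simp only [hWeq]
      exact div_pos (mul_pos (hWPpos v k) (hSpos v k))
        (Finset.sum_pos (fun v' _ => mul_pos (hWPpos v' k) (hSpos v' k)) Finset.univ_nonempty)
    have hTpos : ∀ k d, 0 < ∑ v, X v d * WP n v k / matMul (WP n) (HP n) v d := fun k d =>
      Finset.sum_pos (fun v _ => div_pos (mul_pos (hX v d) (hWPpos v k)) (hMpos v d))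
        Finset.univ_nonempty
    have hHterm : ∀ k d, (∑ v, X v d * WN n v k / matMul (WN n) (HN n) v d)
        = (∑ v, X v d * WP n v k / matMul (WP n) (HP n) v d) / c d := by
      intro k d
      rw [eq_div_iff (ne_of_gt (hcpos d)), Finset.sum_mul]
      refine Finset.sum_congr rfl fun v _ => ?_
      rw [hMN, hWeq]
      have h1 := (hcpos d).ne'
      have h2 := (hMpos v d).ne'
      field_simp
    have hZ : ∀ d, (∑ k', HP n k' d * (∑ v, X v d * WP n v k' / matMul (WP n) (HP n) v d))
        = ∑ v, X v d := by
      intro d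
      have hrw : ∀ k' : Fin K,
          HP n k' d * (∑ v, X v d * WP n v k' / matMul (WP n) (HP n) v d)
            = ∑ v, X v d / matMul (WP n) (HP n) v d * (WP n v k' * HP n k' d) := by
        intro k'
        rw [Finset.mul_sum]
        refine Finset.sum_congr rfl fun v _ => ?_
        ring
      rw [Finset.sum_congr rfl fun k' _ => hrw k', Finset.sum_comm]
      refine Finset.sum_congr rfl fun v _ => ?_
      rw [← Finset.mul_sum,
        show (∑ k', WP n v k' * HP n k' d) = matMul (WP n) (HP n) v d from rfl]
      exact div_mul_cancel₀ (X v d) (hMpos v d).ne'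
    have hHNnew : ∀ k d, HN (n+1) k d
        = HP n k d * (∑ v, X v d * WP n v k / matMul (WP n) (HP n) v d) := by
      intro k d
      rw [hHNrec, hHterm, hc]
      have h1 := (hcpos d).ne'
      field_simp
    have hHPnew : ∀ k d, HP (n+1) k d
        = HP n k d * (∑ v, X v d * WP n v k / matMul (WP n) (HP n) v d) / (∑ v, X v d) := by
      intro k d
      rw [hHPrec, hZ d]
    refine ⟨hWnew, fun v k => hWposN v k, ?_, ?_, ?_, ?_⟩
    · intro k d
      rw [hHPnew]
      exact div_pos (mul_pos (hHPpos k d) (hTpos k d)) (hlampos d)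
    · intro d
      simp only [hHPnew]
      rw [← Finset.sum_div, hZ d, div_self (hlampos d).ne']
    · intro k d
      rw [hHNnew, hHPnew, mul_comm ((∑ v, X v d)), div_mul_cancel₀ _ (hlampos d).ne']
    · intro d
      simp only [hHNnew]
      exact hZ d
  have key : ∀ n, WN n = WP n ∧ (∀ v k, 0 < WN n v k) ∧ (∀ k d, 0 < HP n k d) ∧
      (∀ d, (∑ k, HP n k d) = 1) ∧
      ∃ c : Fin D → ℝ, (∀ d, 0 < c d) ∧ ∀ k d, HN n k d = c d * HP n k d := by
    intro n
    induction n with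
    | zero =>
      refine ⟨hWN0.trans hWP0.symm, fun v k => hWN0 ▸ hW0pos v k,
        fun k d => hHP0 ▸ hH0pos k d, fun d => by rw [hHP0]; exact hH0sum d,
        fun _ => 1, fun d => one_pos, fun k d => by rw [hHN0, hHP0, one_mul]⟩
    | succ n ih =>
      obtain ⟨h1, h2, h3, h4, c, h5, h6⟩ := ih
      obtain ⟨g1, g2, g3, g4, g5, g6⟩ := step n h1 h2 h3 h4 c h5 h6
      exact ⟨g1, g2, g3, g4, fun d => ∑ v, X v d, hlampos, g5⟩
  intro n hn
  obtain ⟨m, rfl⟩ : ∃ m, n = m + 1 := ⟨n - 1, by omega⟩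
  obtain ⟨h1, h2, h3, h4, c, h5, h6⟩ := key m
  obtain ⟨g1, g2, g3, g4, g5, g6⟩ := step m h1 h2 h3 h4 c h5 h6
  exact ⟨g1, g5, g6⟩
end

section
/- Let X ∈ ℝ^{V×D} have strictly positive entries and let λ_d = Σ_v x_{vd}. Let T_NMF denote the joint update map sending a positive pair (W, H) with W-columns in Δ_{V−1} to (W′, H′) with w′_{vk} = (w_{vk} Σ_d x_{vd} h_{kd}/(WH)_{vd}) / (Σ_{v″} w_{v″k} Σ_d x_{v″d} h_{kd}/(WH)_{v″d}) and h′_{kd} = h_{kd} Σ_v x_{vd} w_{vk}/(WH)_{vd}; let T_PLSA denote the map with the same W-update and h′_{kd} = (h_{kd} Σ_v x_{vd} w_{vk}/(WH)_{vd}) / (Σ_{k′} h_{k′d} Σ_v x_{vd} w_{vk′}/(WH)_{vd}). If (W*, H*) is a fixed point of T_NMF (with positive entries and W*-columns in Δ_{V−1}), then Σ_k h*_{kd} = λ_d for all d, and (W*, H̃) with h̃_{kd} = h*_{kd}/λ_d is a fixed point of T_PLSA. Conversely, if (W*, H*) is a fixed point of T_PLSA (with positive entries, W*-columns in Δ_{V−1},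 H*-columns in Δ_{K−1}), then (W*, H̃) with h̃_{kd} = λ_d h*_{kd} is a fixed point of T_NMF. -/
/-- The `W`-component of the joint multiplicative update maps (shared by Algorithms 3
and 5): `w'_{vk} ∝ w_{vk} ∑_d x_{vd} h_{kd} / (WH)_{vd}`, normalized over `v`. -/
noncomputable def updW {V K D : ℕ} (X : Fin V → Fin D → ℝ)
    (W : Fin V → Fin K → ℝ) (H : Fin K → Fin D → ℝ) : Fin V → Fin K → ℝ :=
  fun v k =>
    (W v k * (∑ d, X v d * H k d / matMul W H v d)) /
      (∑ v', W v' k * (∑ d, X v' d * H k d / matMul W H v' d))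

/-- The `H`-component of the joint multiplicative update map of Algorithm 3 (NMF with
an ℓ1 normalization constraint on the columns of `W`). -/
noncomputable def updHnmf {V K D : ℕ} (X : Fin V → Fin D → ℝ)
    (W : Fin V → Fin K → ℝ) (H : Fin K → Fin D → ℝ) : Fin K → Fin D → ℝ :=
  fun k d => H k d * (∑ v, X v d * W v k / matMul W H v d)

/-- The `H`-component of the joint multiplicative update map of Algorithm 5 (PLSA):
the same update followed by column normalization. -/
noncomputable def updHplsa {V K D : ℕ} (X : Fin V → Fin D → ℝ)
    (W : Fin V → Fin K → ℝ) (H : Fin K → Fin D → ℝ) : Fin K → Fin D → ℝ :=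
  fun k d =>
    (H k d * (∑ v, X v d * W v k / matMul W H v d)) /
      (∑ k', H k' d * (∑ v, X v d * W v k' / matMul W H v d))

section aux
variable {V K D : ℕ}

lemma matMul_scale (W : Fin V → Fin K → ℝ) (H H' : Fin K → Fin D → ℝ) (c : Fin D → ℝ)
    (hH' : ∀ k d, H' k d = c d * H k d) (v : Fin V) (d : Fin D) :
    matMul W H' v d = c d * matMul W H v d := by
  simp only [matMul, Finset.mul_sum]
  refine Finset.sum_congr rfl fun k _ => ?_
  rw [hH']; ring

lemma ratio_scale (X : Fin V → Fin D → ℝ) (W : Fin V → Fin K → ℝ)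
    (H H' : Fin K → Fin D → ℝ) (c : Fin D → ℝ)
    (hH' : ∀ k d, H' k d = c d * H k d) (hc : ∀ d, c d ≠ 0)
    (v : Fin V) (k : Fin K) (d : Fin D) :
    X v d * H' k d / matMul W H' v d = X v d * H k d / matMul W H v d := by
  rw [matMul_scale W H H' c hH', hH',
    show X v d * (c d * H k d) = c d * (X v d * H k d) by ring,
    mul_div_mul_left _ _ (hc d)]

lemma updW_scale (X : Fin V → Fin D → ℝ) (W : Fin V → Fin K → ℝ)
    (H H' : Fin K → Fin D → ℝ) (c : Fin D → ℝ)
    (hH' : ∀ k d, H' k d = c d * H k d) (hc : ∀ d, c d ≠ 0) :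
    updW X W H' = updW X W H := by
  funext v k
  unfold updW
  congr 1
  · congr 1
    exact Finset.sum_congr rfl fun d _ => ratio_scale X W H H' c hH' hc v k d
  · refine Finset.sum_congr rfl fun v' _ => ?_
    congr 1
    exact Finset.sum_congr rfl fun d _ => ratio_scale X W H H' c hH' hc v' k d

lemma S_scale (X : Fin V → Fin D → ℝ) (W : Fin V → Fin K → ℝ)
    (H H' : Fin K → Fin D → ℝ) (c : Fin D → ℝ)
    (hH' : ∀ k d, H' k d = c d * H k d) (k : Fin K) (d : Fin D) :
    (∑ v, X v d * W v k / matMul W H' v d)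
      = (∑ v, X v d * W v k / matMul W H v d) / c d := by
  rw [Finset.sum_div]
  refine Finset.sum_congr rfl fun v _ => ?_
  rw [matMul_scale W H H' c hH', div_div, mul_comm (c d)]

lemma updHplsa_scale (X : Fin V → Fin D → ℝ) (W : Fin V → Fin K → ℝ)
    (H H' : Fin K → Fin D → ℝ) (c : Fin D → ℝ)
    (hH' : ∀ k d, H' k d = c d * H k d) (hc : ∀ d, c d ≠ 0) :
    updHplsa X W H' = updHplsa X W H := by
  funext k d
  simp only [updHplsa]
  have key : ∀ k' : Fin K,
      H' k' d * (∑ v, X v d * W v k' / matMul W H' v d)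
        = H k' d * (∑ v, X v d * W v k' / matMul W H v d) := by
    intro k'
    have e : ∀ a h s : ℝ, a ≠ 0 → a * h * (s / a) = h * s := by
      intro a h s ha; field_simp
    rw [S_scale X W H H' c hH', hH']
    exact e (c d) (H k' d) _ (hc d)
  rw [key k]
  congr 1
  exact Finset.sum_congr rfl fun k' _ => key k'

lemma sumHS (X : Fin V → Fin D → ℝ) (W : Fin V → Fin K → ℝ)
    (H : Fin K → Fin D → ℝ) (d : Fin D)
    (hM : ∀ v, matMul W H v d ≠ 0) :
    ∑ k, H k d * (∑ v, X v d * W v k / matMul W H v d) = ∑ v, X v d := by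
  simp_rw [Finset.mul_sum]
  rw [Finset.sum_comm]
  refine Finset.sum_congr rfl fun v _ => ?_
  have h1 : ∑ k, H k d * (X v d * W v k / matMul W H v d)
      = (X v d / matMul W H v d) * ∑ k, W v k * H k d := by
    rw [Finset.mul_sum]
    refine Finset.sum_congr rfl fun k _ => ?_
    ring
  rw [h1, show (∑ k, W v k * H k d) = matMul W H v d from rfl,
    div_mul_cancel₀ _ (hM v)]

end aux

/-- Correspondence between fixed points of the NMF update map `T_NMF = (updW, updHnmf)`
and fixed points of the PLSA update map `T_PLSA = (updW, updHplsa)`, via scaling the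
columns of `H` by `λ_d = ∑_v x_{vd}`. -/
theorem nmf_plsa_fixed_points {V K D : ℕ} (hK : 0 < K)
    (X : Fin V → Fin D → ℝ) (hX : ∀ v d, 0 < X v d) :
    -- from a fixed point of T_NMF to a fixed point of T_PLSA
    (∀ (W : Fin V → Fin K → ℝ) (H : Fin K → Fin D → ℝ),
      (∀ v k, 0 < W v k) → (∀ k, (∑ v, W v k) = 1) → (∀ k d, 0 < H k d) →
      updW X W H = W → updHnmf X W H = H →
      ((∀ d, (∑ k, H k d) = ∑ v, X v d) ∧
       updW X W (fun k d => H k d / ∑ v, X v d) = W ∧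
       updHplsa X W (fun k d => H k d / ∑ v, X v d)
         = fun k d => H k d / ∑ v, X v d)) ∧
    -- from a fixed point of T_PLSA to a fixed point of T_NMF
    (∀ (W : Fin V → Fin K → ℝ) (H : Fin K → Fin D → ℝ),
      (∀ v k, 0 < W v k) → (∀ k, (∑ v, W v k) = 1) →
      (∀ k d, 0 < H k d) → (∀ d, (∑ k, H k d) = 1) →
      updW X W H = W → updHplsa X W H = H →
      (updW X W (fun k d => (∑ v, X v d) * H k d) = W ∧
       updHnmf X W (fun k d => (∑ v, X v d) * H k d)
         = fun k d => (∑ v, X v d) * H k d)) := by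
  have hKne : Nonempty (Fin K) := Fin.pos_iff_nonempty.mp hK
  constructor
  · -- NMF fixed point → PLSA fixed point
    intro W H hW hWs hH hfixW hfixH
    have hM : ∀ v d, 0 < matMul W H v d := fun v d =>
      Finset.sum_pos (fun k _ => mul_pos (hW v k) (hH k d)) Finset.univ_nonempty
    have hS : ∀ k d, (∑ v, X v d * W v k / matMul W H v d) = 1 := by
      intro k d
      have h := congrFun (congrFun hfixH k) d
      simp only [updHnmf] at h
      exact mul_left_cancel₀ (hH k d).ne' (h.trans (mul_one _).symm)
    have hsum : ∀ d, (∑ k, H k d) = ∑ v, X v d := by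
      intro d
      rw [← sumHS X W H d (fun v => (hM v d).ne')]
      refine Finset.sum_congr rfl fun k _ => ?_
      rw [hS k d, mul_one]
    have hLpos : ∀ d, 0 < ∑ v, X v d := by
      intro d
      rw [← hsum d]
      exact Finset.sum_pos (fun k _ => hH k d) Finset.univ_nonempty
    have hH' : ∀ k d, (fun k d => H k d / ∑ v, X v d) k d
        = (fun d => (∑ v, X v d)⁻¹) d * H k d := fun k d => div_eq_inv_mul _ _
    have hc : ∀ d, ((fun d => (∑ v, X v d)⁻¹) d) ≠ 0 :=
      fun d => inv_ne_zero (hLpos d).ne'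
    refine ⟨hsum, ?_, ?_⟩
    · exact (updW_scale X W H _ _ hH' hc).trans hfixW
    · rw [updHplsa_scale X W H _ _ hH' hc]
      funext k d
      simp only [updHplsa]
      simp_rw [hS, mul_one]
      rw [hsum d]
  · -- PLSA fixed point → NMF fixed point
    intro W H hW hWs hH hHs hfixW hfixH
    have hM : ∀ v d, 0 < matMul W H v d := fun v d =>
      Finset.sum_pos (fun k _ => mul_pos (hW v k) (hH k d)) Finset.univ_nonempty
    have hT : ∀ d, (∑ k', H k' d * (∑ v, X v d * W v k' / matMul W H v d))
        = ∑ v, X v d := fun d => sumHS X W H d (fun v => (hM v d).ne')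
    obtain ⟨k0⟩ := hKne
    have hLne : ∀ d, (∑ v, X v d) ≠ 0 := by
      intro d h0
      have h := congrFun (congrFun hfixH k0) d
      simp only [updHplsa] at h
      rw [hT d, h0, div_zero] at h
      exact (hH k0 d).ne' h.symm
    have hS : ∀ k d, (∑ v, X v d * W v k / matMul W H v d) = ∑ v, X v d := by
      intro k d
      have h := congrFun (congrFun hfixH k) d
      simp only [updHplsa] at h
      rw [hT d] at h
      have h2 := (div_eq_iff (hLne d)).mp h
      exact mul_left_cancel₀ (hH k d).ne' h2
    have hH' : ∀ k d, (fun k d => (∑ v, X v d) * H k d) k d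
        = (fun d => ∑ v, X v d) d * H k d := fun k d => rfl
    constructor
    · exact (updW_scale X W H _ _ hH' hLne).trans hfixW
    · funext k d
      simp only [updHnmf]
      rw [S_scale X W H _ _ hH' k d, hS k d, div_self (hLne d), mul_one]
end

section
/- Let X ∈ ℝ_+^{V×D} and λ > 0. If (W, H) is a global minimizer of D_KL(X‖WH) over the set {(W, H) : every column of W lies in Δ_{V−1}, H ∈ ℝ_+^{K×D}}, then (W, (1/(1+λ))H) is a global minimizer of D_KL(X‖WH) + λ‖H‖₁ over the same set. Conversely, if (W, H) is a global minimizer of D_KL(X‖WH) + λ‖H‖₁ over this set, then (W, (1+λ)H) is a global minimizer of D_KL(X‖WH) over this set. In particular, the Lasso penalty with an ℓ1 normalization constraint on W merely rescales the solutions and cannot induce any sparsity in H. -/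
open Finset

lemma EReal.coe_finset_sum_s12 {ι : Type*} (s : Finset ι) (f : ι → ℝ) :
    ((∑ i ∈ s, f i : ℝ) : EReal) = ∑ i ∈ s, (f i : EReal) :=
  map_sum (⟨⟨Real.toEReal, EReal.coe_zero⟩, EReal.coe_add⟩ : ℝ →+ EReal) f s

lemma klTerm_const_mul {c : ℝ} (hc : 0 < c) (x y : ℝ) :
    klTerm x (c * y) = klTerm x y + ((-(x * Real.log c) + (c - 1) * y : ℝ) : EReal) := by
  unfold klTerm
  by_cases hx : x = 0
  · rw [if_pos hx, if_pos hx, hx, ← EReal.coe_add, EReal.coe_eq_coe_iff]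
    ring
  by_cases hy : y = 0
  · rw [if_neg hx, if_neg hx, hy, mul_zero, if_pos rfl, EReal.top_add_coe]
  have hcy : c * y ≠ 0 := mul_ne_zero hc.ne' hy
  simp only [if_neg hx, if_neg hy, if_neg hcy, ← EReal.coe_add, EReal.coe_eq_coe_iff]
  rw [mul_comm c y, ← div_div, Real.log_div (div_ne_zero hx hy) hc.ne']
  ring

lemma klDiv_const_mul {V D : ℕ} {c : ℝ} (hc : 0 < c) (X Y : Fin V → Fin D → ℝ) :
    klDiv X (fun v d => c * Y v d) = klDiv X Y
      + ((-(Real.log c * ∑ v, ∑ d, X v d) + (c - 1) * ∑ v, ∑ d, Y v d : ℝ) : EReal) := by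
  have hsum : -(Real.log c * ∑ v, ∑ d, X v d) + (c - 1) * ∑ v, ∑ d, Y v d
      = ∑ v, ∑ d, (-(X v d * Real.log c) + (c - 1) * Y v d) := by
    simp only [sum_add_distrib, mul_sum, sum_neg_distrib]
    simp only [mul_comm]
  simp only [klDiv, klTerm_const_mul hc, hsum, EReal.coe_finset_sum_s12, ← sum_add_distrib]

lemma matMul_const_mul {V K D : ℕ} (c : ℝ) (W : Fin V → Fin K → ℝ) (H : Fin K → Fin D → ℝ) :
    matMul W (fun k d => c * H k d) = fun v d => c * matMul W H v d := by
  funext v d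
  simp only [matMul, mul_sum, mul_left_comm]

lemma sum_matMul_of_sum_col_eq_one {V K D : ℕ} {W : Fin V → Fin K → ℝ}
    (hW : ∀ k, ∑ v, W v k = 1) (H : Fin K → Fin D → ℝ) :
    ∑ v, ∑ d, matMul W H v d = ∑ k, ∑ d, H k d := by
  calc ∑ v, ∑ d, matMul W H v d = ∑ v, ∑ k, W v k * ∑ d, H k d := by
        simp only [matMul, mul_sum]
        exact sum_congr rfl fun _ _ => Finset.sum_comm
    _ = ∑ k, (∑ v, W v k) * ∑ d, H k d := by
        rw [Finset.sum_comm]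
        simp only [sum_mul]
    _ = ∑ k, ∑ d, H k d := by simp only [hW, one_mul]

lemma klDiv_matMul_div_add_penalty {V K D : ℕ} (X : Fin V → Fin D → ℝ) {lam : ℝ}
    (hlam : 0 < 1 + lam) {W : Fin V → Fin K → ℝ} (hW : ∀ k, ∑ v, W v k = 1)
    (H : Fin K → Fin D → ℝ) :
    klDiv X (matMul W (fun k d => H k d / (1 + lam)))
        + ((lam * ∑ k, ∑ d, H k d / (1 + lam) : ℝ) : EReal)
      = klDiv X (matMul W H) + ((Real.log (1 + lam) * ∑ v, ∑ d, X v d : ℝ) : EReal) := by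
  simp only [div_eq_inv_mul _ (1 + lam), ← mul_sum]
  rw [matMul_const_mul, klDiv_const_mul (inv_pos.mpr hlam), sum_matMul_of_sum_col_eq_one hW,
    add_assoc, ← EReal.coe_add, Real.log_inv]
  congr 2
  field_simp
  ring

lemma klDiv_matMul_add_penalty {V K D : ℕ} (X : Fin V → Fin D → ℝ) {lam : ℝ}
    (hlam : 0 < 1 + lam) {W : Fin V → Fin K → ℝ} (hW : ∀ k, ∑ v, W v k = 1)
    (H : Fin K → Fin D → ℝ) :
    klDiv X (matMul W H) + ((lam * ∑ k, ∑ d, H k d : ℝ) : EReal)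
      = klDiv X (matMul W (fun k d => (1 + lam) * H k d))
        + ((Real.log (1 + lam) * ∑ v, ∑ d, X v d : ℝ) : EReal) := by
  simpa only [mul_div_cancel_left₀ _ hlam.ne'] using
    klDiv_matMul_div_add_penalty X hlam hW fun k d => (1 + lam) * H k d

theorem lasso_penalty_insufficient_general {V K D : ℕ}
    (X : Fin V → Fin D → ℝ)
    (lam : ℝ) (hlam : 0 < lam) :
    -- a minimizer of D_KL gives a minimizer of the penalized objective after rescaling
    (∀ (W : Fin V → Fin K → ℝ) (H : Fin K → Fin D → ℝ),
      (∀ v k, 0 ≤ W v k) → (∀ k, (∑ v, W v k) = 1) → (∀ k d, 0 ≤ H k d) →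
      (∀ (W' : Fin V → Fin K → ℝ) (H' : Fin K → Fin D → ℝ),
        (∀ v k, 0 ≤ W' v k) → (∀ k, (∑ v, W' v k) = 1) → (∀ k d, 0 ≤ H' k d) →
        klDiv X (matMul W H) ≤ klDiv X (matMul W' H')) →
      (∀ (W' : Fin V → Fin K → ℝ) (H' : Fin K → Fin D → ℝ),
        (∀ v k, 0 ≤ W' v k) → (∀ k, (∑ v, W' v k) = 1) → (∀ k d, 0 ≤ H' k d) →
        klDiv X (matMul W (fun k d => H k d / (1 + lam)))
            + ((lam * ∑ k, ∑ d, H k d / (1 + lam) : ℝ) : EReal)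
          ≤ klDiv X (matMul W' H') + ((lam * ∑ k, ∑ d, H' k d : ℝ) : EReal))) ∧
    -- conversely, a minimizer of the penalized objective gives a minimizer of D_KL
    (∀ (W : Fin V → Fin K → ℝ) (H : Fin K → Fin D → ℝ),
      (∀ v k, 0 ≤ W v k) → (∀ k, (∑ v, W v k) = 1) → (∀ k d, 0 ≤ H k d) →
      (∀ (W' : Fin V → Fin K → ℝ) (H' : Fin K → Fin D → ℝ),
        (∀ v k, 0 ≤ W' v k) → (∀ k, (∑ v, W' v k) = 1) → (∀ k d, 0 ≤ H' k d) →
        klDiv X (matMul W H) + ((lam * ∑ k, ∑ d, H k d : ℝ) : EReal)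
          ≤ klDiv X (matMul W' H') + ((lam * ∑ k, ∑ d, H' k d : ℝ) : EReal)) →
      (∀ (W' : Fin V → Fin K → ℝ) (H' : Fin K → Fin D → ℝ),
        (∀ v k, 0 ≤ W' v k) → (∀ k, (∑ v, W' v k) = 1) → (∀ k d, 0 ≤ H' k d) →
        klDiv X (matMul W (fun k d => (1 + lam) * H k d))
          ≤ klDiv X (matMul W' H'))) := by
  have hpos : 0 < 1 + lam := by linarith
  constructor
  · intro W H _ hW _ hmin W' H' hW'nonneg hW' hH'
    rw [klDiv_matMul_div_add_penalty X hpos hW, klDiv_matMul_add_penalty X hpos hW']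
    gcongr
    exact hmin W' _ hW'nonneg hW' fun k d => mul_nonneg hpos.le (hH' k d)
  · intro W H _ hW _ hmin W' H' hW'nonneg hW' hH'
    have hle := hmin W' (fun k d => H' k d / (1 + lam)) hW'nonneg hW'
      fun k d => div_nonneg (hH' k d) hpos.le
    rw [klDiv_matMul_add_penalty X hpos hW, klDiv_matMul_div_add_penalty X hpos hW'] at hle
    exact (EReal.addLECancellable_coe _).add_le_add_iff_right.mp hle

/-- A Lasso penalty on `H` together with an ℓ1 normalization constraint on the columns
of `W` merely rescales the solutions of NMF and cannot induce any sparsity in `H`: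
minimizers of the unpenalized and of the ℓ1-penalized problems over the constrained set
correspond to each other via `H ↦ H/(1+λ)` and `H ↦ (1+λ)H`. -/
theorem lasso_penalty_insufficient {V K D : ℕ}
    (X : Fin V → Fin D → ℝ) (hX : ∀ v d, 0 ≤ X v d)
    (lam : ℝ) (hlam : 0 < lam) :
    -- a minimizer of D_KL gives a minimizer of the penalized objective after rescaling
    (∀ (W : Fin V → Fin K → ℝ) (H : Fin K → Fin D → ℝ),
      (∀ v k, 0 ≤ W v k) → (∀ k, (∑ v, W v k) = 1) → (∀ k d, 0 ≤ H k d) →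
      (∀ (W' : Fin V → Fin K → ℝ) (H' : Fin K → Fin D → ℝ),
        (∀ v k, 0 ≤ W' v k) → (∀ k, (∑ v, W' v k) = 1) → (∀ k d, 0 ≤ H' k d) →
        klDiv X (matMul W H) ≤ klDiv X (matMul W' H')) →
      (∀ (W' : Fin V → Fin K → ℝ) (H' : Fin K → Fin D → ℝ),
        (∀ v k, 0 ≤ W' v k) → (∀ k, (∑ v, W' v k) = 1) → (∀ k d, 0 ≤ H' k d) →
        klDiv X (matMul W (fun k d => H k d / (1 + lam)))
            + ((lam * ∑ k, ∑ d, H k d / (1 + lam) : ℝ) : EReal)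
          ≤ klDiv X (matMul W' H') + ((lam * ∑ k, ∑ d, H' k d : ℝ) : EReal))) ∧
    -- conversely, a minimizer of the penalized objective gives a minimizer of D_KL
    (∀ (W : Fin V → Fin K → ℝ) (H : Fin K → Fin D → ℝ),
      (∀ v k, 0 ≤ W v k) → (∀ k, (∑ v, W v k) = 1) → (∀ k d, 0 ≤ H k d) →
      (∀ (W' : Fin V → Fin K → ℝ) (H' : Fin K → Fin D → ℝ),
        (∀ v k, 0 ≤ W' v k) → (∀ k, (∑ v, W' v k) = 1) → (∀ k d, 0 ≤ H' k d) →
        klDiv X (matMul W H) + ((lam * ∑ k, ∑ d, H k d : ℝ) : EReal)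
          ≤ klDiv X (matMul W' H') + ((lam * ∑ k, ∑ d, H' k d : ℝ) : EReal)) →
      (∀ (W' : Fin V → Fin K → ℝ) (H' : Fin K → Fin D → ℝ),
        (∀ v k, 0 ≤ W' v k) → (∀ k, (∑ v, W' v k) = 1) → (∀ k d, 0 ≤ H' k d) →
        klDiv X (matMul W (fun k d => (1 + lam) * H k d))
          ≤ klDiv X (matMul W' H'))) :=
  lasso_penalty_insufficient_general X lam hlam
end

section
/- Let 0 < p < ∞, let X ∈ ℝ_+^{V×D}, let D : ℝ_+^{V×D} × ℝ_+^{V×D} → ℝ_+ be any function, and let R : ℝ_+^{K×D} → ℝ_+ be any function. Let 𝔸_p = {W ∈ ℝ_+^{V×K} : ‖w_k‖_p = 1 for every column k}, and for W ∈ ℝ_+^{V×K} let D_p(W) ∈ ℝ_+^{K×K} be the diagonal matrix with entries ‖w_1‖_p, …, ‖w_K‖_p. (i) If (W, H) ∈ 𝔸_p × ℝ_+^{K×D} is a global minimizer of D(X‖WH) + R(H) over 𝔸_p × ℝ_+^{K×D}, then (W, H) is a global minimizer of D(X‖WH) + R(D_p(W)H) over all of ℝ_+^{V×K} × ℝ_+^{K×D}.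 (ii) Conversely, if (W, H) ∈ ℝ_+^{V×K} × ℝ_+^{K×D} is a global minimizer of D(X‖WH) + R(D_p(W)H) over ℝ_+^{V×K} × ℝ_+^{K×D} and ‖w_k‖_p > 0 for every k, then (W D_p(W)^{-1}, D_p(W)H) is a global minimizer of D(X‖WH) + R(H) over 𝔸_p × ℝ_+^{K×D}. -/
/-- ℓp "norm" `‖y‖_p = (∑ v, y_v ^ p) ^ (1/p)` of a nonnegative vector, for real
`0 < p < ∞` (real powers). -/
noncomputable def pNorm {V : ℕ} (p : ℝ) (y : Fin V → ℝ) : ℝ :=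
  (∑ v, y v ^ p) ^ (1 / p)


lemma pNorm_nonneg' {V : ℕ} (p : ℝ) (y : Fin V → ℝ) (hy : ∀ v, 0 ≤ y v) :
    0 ≤ pNorm p y :=
  Real.rpow_nonneg (Finset.sum_nonneg fun v _ => Real.rpow_nonneg (hy v) _) _

lemma pNorm_div {V : ℕ} (p : ℝ) (hp : 0 < p) (y : Fin V → ℝ) (hy : ∀ v, 0 ≤ y v)
    (c : ℝ) (hc : 0 < c) : pNorm p (fun v => y v / c) = pNorm p y / c := by
  unfold pNorm
  have h1 : ∀ v : Fin V, (y v / c) ^ p = y v ^ p / c ^ p := fun v =>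
    Real.div_rpow (hy v) hc.le p
  simp only [h1, ← Finset.sum_div]
  rw [Real.div_rpow (Finset.sum_nonneg fun v _ => Real.rpow_nonneg (hy v) _)
    (Real.rpow_nonneg hc.le _),
    ← Real.rpow_mul hc.le, mul_one_div, div_self hp.ne', Real.rpow_one]

lemma pNorm_eq_zero {V : ℕ} (p : ℝ) (hp : 0 < p) (y : Fin V → ℝ) (hy : ∀ v, 0 ≤ y v)
    (h : pNorm p y = 0) : ∀ v, y v = 0 := by
  unfold pNorm at h
  have hs : (∑ v, y v ^ p) = 0 := by
    by_contra hne
    have hpos : 0 < ∑ v, y v ^ p :=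
      lt_of_le_of_ne (Finset.sum_nonneg fun v _ => Real.rpow_nonneg (hy v) _)
        (Ne.symm hne)
    exact absurd h (ne_of_gt (Real.rpow_pos_of_pos hpos _))
  intro v
  have := (Finset.sum_eq_zero_iff_of_nonneg
    (fun v _ => Real.rpow_nonneg (hy v) p)).mp hs v (Finset.mem_univ v)
  have := (Real.rpow_eq_zero (hy v) hp.ne').mp this
  exact this

/-- Any column normalization constraint `W ∈ 𝔸_p` on `W` together with any penalty
`R(H)` is equivalent to the unconstrained problem in which the penalty acts on the
rescaled matrix `D_p(W)H`; constraint and penalty are competing regularizers. -/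
theorem normalization_penalty_equivalence {V K D : ℕ}
    (p : ℝ) (hp : 0 < p)
    (X : Fin V → Fin D → ℝ) (hX : ∀ v d, 0 ≤ X v d)
    (Dist : (Fin V → Fin D → ℝ) → (Fin V → Fin D → ℝ) → ℝ)
    (hDist : ∀ Y Z, 0 ≤ Dist Y Z)
    (R : (Fin K → Fin D → ℝ) → ℝ) (hR : ∀ H, 0 ≤ R H) :
    -- (i) a constrained minimizer is an unconstrained minimizer of the reformulation
    (∀ (W : Fin V → Fin K → ℝ) (H : Fin K → Fin D → ℝ),
      (∀ v k, 0 ≤ W v k) → (∀ k, pNorm p (fun v => W v k) = 1) → (∀ k d, 0 ≤ H k d) →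
      (∀ (W' : Fin V → Fin K → ℝ) (H' : Fin K → Fin D → ℝ),
        (∀ v k, 0 ≤ W' v k) → (∀ k, pNorm p (fun v => W' v k) = 1) →
        (∀ k d, 0 ≤ H' k d) →
        Dist X (matMul W H) + R H ≤ Dist X (matMul W' H') + R H') →
      (∀ (W' : Fin V → Fin K → ℝ) (H' : Fin K → Fin D → ℝ),
        (∀ v k, 0 ≤ W' v k) → (∀ k d, 0 ≤ H' k d) →
        Dist X (matMul W H) + R (fun k d => pNorm p (fun v => W v k) * H k d)
          ≤ Dist X (matMul W' H')
              + R (fun k d => pNorm p (fun v => W' v k) * H' k d))) ∧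
    -- (ii) normalizing an unconstrained minimizer of the reformulation gives a
    -- constrained minimizer
    (∀ (W : Fin V → Fin K → ℝ) (H : Fin K → Fin D → ℝ),
      (∀ v k, 0 ≤ W v k) → (∀ k d, 0 ≤ H k d) →
      (∀ k, 0 < pNorm p (fun v => W v k)) →
      (∀ (W' : Fin V → Fin K → ℝ) (H' : Fin K → Fin D → ℝ),
        (∀ v k, 0 ≤ W' v k) → (∀ k d, 0 ≤ H' k d) →
        Dist X (matMul W H) + R (fun k d => pNorm p (fun v => W v k) * H k d)
          ≤ Dist X (matMul W' H')
              + R (fun k d => pNorm p (fun v => W' v k) * H' k d)) →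
      -- the normalized pair lies in the constrained set
      ((∀ k, pNorm p (fun v => W v k / pNorm p (fun v' => W v' k)) = 1) ∧
      -- and it minimizes the constrained problem
      (∀ (W' : Fin V → Fin K → ℝ) (H' : Fin K → Fin D → ℝ),
        (∀ v k, 0 ≤ W' v k) → (∀ k, pNorm p (fun v => W' v k) = 1) →
        (∀ k d, 0 ≤ H' k d) →
        Dist X (matMul (fun v k => W v k / pNorm p (fun v' => W v' k))
            (fun k d => pNorm p (fun v => W v k) * H k d))
          + R (fun k d => pNorm p (fun v => W v k) * H k d)
          ≤ Dist X (matMul W' H') + R H'))) := by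
  constructor
  · -- Part (i)
    intro W H hW hWn hH hmin W' H' hW' hH'
    set n' : Fin K → ℝ := fun k => pNorm p (fun v => W' v k) with hn'def
    have hn'nonneg : ∀ k, 0 ≤ n' k := fun k => pNorm_nonneg' p _ (fun v => hW' v k)
    set W'' : Fin V → Fin K → ℝ :=
      fun v k => if n' k = 0 then W v k else W' v k / n' k with hW''def
    set H'' : Fin K → Fin D → ℝ := fun k d => n' k * H' k d with hH''def
    have hW''nonneg : ∀ v k, 0 ≤ W'' v k := by
      intro v k
      by_cases h : n' k = 0
      · simp [hW''def, h, hW v k]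
      · simp [hW''def, h]
        exact div_nonneg (hW' v k) (hn'nonneg k)
    have hW''norm : ∀ k, pNorm p (fun v => W'' v k) = 1 := by
      intro k
      by_cases h : n' k = 0
      · simp only [hW''def, h, if_true]
        exact hWn k
      · have hc : 0 < n' k := lt_of_le_of_ne (hn'nonneg k) (Ne.symm h)
        simp only [hW''def, h, if_false]
        rw [pNorm_div p hp _ (fun v => hW' v k) _ hc]
        exact div_self h
    have hH''nonneg : ∀ k d, 0 ≤ H'' k d := fun k d =>
      mul_nonneg (hn'nonneg k) (hH' k d)
    have hMM : matMul W'' H'' = matMul W' H' := by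
      funext v d
      unfold matMul
      refine Finset.sum_congr rfl fun k _ => ?_
      by_cases h : n' k = 0
      · have hz : W' v k = 0 := pNorm_eq_zero p hp _ (fun v => hW' v k) h v
        simp [hW''def, hH''def, h, hz]
      · simp only [hW''def, hH''def, h, if_false]
        field_simp
    have hRH : (fun k d => pNorm p (fun v => W v k) * H k d) = H := by
      funext k d; rw [hWn k, one_mul]
    rw [hRH]
    calc Dist X (matMul W H) + R H
        ≤ Dist X (matMul W'' H'') + R H'' :=
          hmin W'' H'' hW''nonneg hW''norm hH''nonneg
      _ = Dist X (matMul W' H') + R (fun k d => n' k * H' k d) := by rw [hMM]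
  · -- Part (ii)
    intro W H hW hH hn hmin
    have hnorm1 : ∀ k, pNorm p (fun v => W v k / pNorm p (fun v' => W v' k)) = 1 := by
      intro k
      rw [pNorm_div p hp _ (fun v => hW v k) _ (hn k)]
      exact div_self (hn k).ne'
    refine ⟨hnorm1, ?_⟩
    intro W' H' hW' hWn' hH'
    have hMM : matMul (fun v k => W v k / pNorm p (fun v' => W v' k))
        (fun k d => pNorm p (fun v => W v k) * H k d) = matMul W H := by
      funext v d
      unfold matMul
      refine Finset.sum_congr rfl fun k _ => ?_
      have := (hn k).ne'
      field_simp
    rw [hMM]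
    have hRH' : (fun k d => pNorm p (fun v => W' v k) * H' k d) = H' := by
      funext k d; rw [hWn' k, one_mul]
    have := hmin W' H' hW' hH'
    rwa [hRH'] at this
end

section
/- Let 0 < p, q < ∞, λ > 0, let X ∈ ℝ_+^{V×D}, and let D : ℝ_+^{V×D} × ℝ_+^{V×D} → ℝ_+ be any function. Let 𝔸_p = {W ∈ ℝ_+^{V×K} : ‖w_k‖_p = 1 for every column k}. (i) If (W, H) ∈ 𝔸_p × ℝ_+^{K×D} is a global minimizer of D(X‖WH) + λ Σ_{k,d} h_{kd}^q over 𝔸_p × ℝ_+^{K×D}, then it is a global minimizer of D(X‖WH) + λ Σ_k ‖w_k‖_p^q · (Σ_d h_{kd}^q) over all of ℝ_+^{V×K} × ℝ_+^{K×D}. (ii) Conversely, if (W, H) is a global minimizer of D(X‖WH) + λ Σ_k ‖w_k‖_p^q · (Σ_d h_{kd}^q) over ℝ_+^{V×K} × ℝ_+^{K×D} with ‖w_k‖_p > 0 for every k, then the pair obtained by replacing each column w_k with w_k/‖w_k‖_p and each row h_k of H with ‖w_k‖_p h_k is a global minimizer of D(X‖WH) + λ Σ_{k,d} h_{kd}^q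 over 𝔸_p × ℝ_+^{K×D}. -/
lemma pNorm_smul {V : ℕ} {p : ℝ} (hp : 0 < p) (c : ℝ) (hc : 0 ≤ c)
    (y : Fin V → ℝ) (hy : ∀ v, 0 ≤ y v) :
    pNorm p (fun v => c * y v) = c * pNorm p y := by
  unfold pNorm
  have h1 : ∀ v, (c * y v) ^ p = c ^ p * y v ^ p := fun v => Real.mul_rpow hc (hy v)
  simp only [h1, ← Finset.mul_sum]
  rw [Real.mul_rpow (Real.rpow_nonneg hc p)
      (Finset.sum_nonneg fun v _ => Real.rpow_nonneg (hy v) p),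
    ← Real.rpow_mul hc, mul_one_div, div_self hp.ne', Real.rpow_one]

lemma pNorm_col_zero {V : ℕ} {p : ℝ} (hp : 0 < p) (y : Fin V → ℝ) (hy : ∀ v, 0 ≤ y v)
    (h : pNorm p y = 0) : ∀ v, y v = 0 := by
  unfold pNorm at h
  have hs : (∑ v, y v ^ p) = 0 :=
    (Real.rpow_eq_zero (Finset.sum_nonneg fun v _ => Real.rpow_nonneg (hy v) p)
      (one_div_ne_zero hp.ne')).mp h
  intro v
  exact (Real.rpow_eq_zero (hy v) hp.ne').mp
    ((Finset.sum_eq_zero_iff_of_nonneg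
      (fun v _ => Real.rpow_nonneg (hy v) p)).mp hs v (Finset.mem_univ v))

lemma pNorm_normalize {V : ℕ} {p : ℝ} (hp : 0 < p) (y : Fin V → ℝ)
    (hy : ∀ v, 0 ≤ y v) (hpos : 0 < pNorm p y) :
    pNorm p (fun v => y v / pNorm p y) = 1 := by
  have h : (fun v => y v / pNorm p y) = fun v => (pNorm p y)⁻¹ * y v := by
    funext v; rw [div_eq_inv_mul]
  rw [h, pNorm_smul hp _ (inv_nonneg.mpr hpos.le) y hy, inv_mul_cancel₀ hpos.ne']

/-- An ℓp normalization constraint on the columns of `W` together with an `ℓq^q` penalty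
`λ ∑_{k,d} h_{kd}^q` on `H` is equivalent to the unconstrained problem with the mixed
penalty `λ ∑_k ‖w_k‖_p^q ∑_d h_{kd}^q`: the two act as competing regularizers. -/
theorem lp_constraint_lq_penalty_equivalence {V K D : ℕ}
    (p q : ℝ) (hp : 0 < p) (hq : 0 < q)
    (lam : ℝ) (hlam : 0 < lam)
    (X : Fin V → Fin D → ℝ) (hX : ∀ v d, 0 ≤ X v d)
    (Dist : (Fin V → Fin D → ℝ) → (Fin V → Fin D → ℝ) → ℝ)
    (hDist : ∀ Y Z, 0 ≤ Dist Y Z) :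
    -- (i) a constrained minimizer is an unconstrained minimizer of the reformulation
    (∀ (W : Fin V → Fin K → ℝ) (H : Fin K → Fin D → ℝ),
      (∀ v k, 0 ≤ W v k) → (∀ k, pNorm p (fun v => W v k) = 1) → (∀ k d, 0 ≤ H k d) →
      (∀ (W' : Fin V → Fin K → ℝ) (H' : Fin K → Fin D → ℝ),
        (∀ v k, 0 ≤ W' v k) → (∀ k, pNorm p (fun v => W' v k) = 1) →
        (∀ k d, 0 ≤ H' k d) →
        Dist X (matMul W H) + lam * (∑ k, ∑ d, H k d ^ q)
          ≤ Dist X (matMul W' H') + lam * (∑ k, ∑ d, H' k d ^ q)) →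
      (∀ (W' : Fin V → Fin K → ℝ) (H' : Fin K → Fin D → ℝ),
        (∀ v k, 0 ≤ W' v k) → (∀ k d, 0 ≤ H' k d) →
        Dist X (matMul W H)
            + lam * (∑ k, pNorm p (fun v => W v k) ^ q * (∑ d, H k d ^ q))
          ≤ Dist X (matMul W' H')
            + lam * (∑ k, pNorm p (fun v => W' v k) ^ q * (∑ d, H' k d ^ q)))) ∧
    -- (ii) normalizing an unconstrained minimizer of the reformulation gives a
    -- constrained minimizer
    (∀ (W : Fin V → Fin K → ℝ) (H : Fin K → Fin D → ℝ),
      (∀ v k, 0 ≤ W v k) → (∀ k d, 0 ≤ H k d) →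
      (∀ k, 0 < pNorm p (fun v => W v k)) →
      (∀ (W' : Fin V → Fin K → ℝ) (H' : Fin K → Fin D → ℝ),
        (∀ v k, 0 ≤ W' v k) → (∀ k d, 0 ≤ H' k d) →
        Dist X (matMul W H)
            + lam * (∑ k, pNorm p (fun v => W v k) ^ q * (∑ d, H k d ^ q))
          ≤ Dist X (matMul W' H')
            + lam * (∑ k, pNorm p (fun v => W' v k) ^ q * (∑ d, H' k d ^ q))) →
      -- the normalized pair lies in the constrained set
      ((∀ k, pNorm p (fun v => W v k / pNorm p (fun v' => W v' k)) = 1) ∧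
      -- and it minimizes the constrained problem
      (∀ (W' : Fin V → Fin K → ℝ) (H' : Fin K → Fin D → ℝ),
        (∀ v k, 0 ≤ W' v k) → (∀ k, pNorm p (fun v => W' v k) = 1) →
        (∀ k d, 0 ≤ H' k d) →
        Dist X (matMul (fun v k => W v k / pNorm p (fun v' => W v' k))
            (fun k d => pNorm p (fun v => W v k) * H k d))
            + lam * (∑ k, ∑ d, (pNorm p (fun v => W v k) * H k d) ^ q)
          ≤ Dist X (matMul W' H') + lam * (∑ k, ∑ d, H' k d ^ q)))) := by
  constructor
  · -- part (i)
    intro W H hW hWn hH hmin W' H' hW' hH'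
    set n' : Fin K → ℝ := fun k => pNorm p (fun v => W' v k) with hn'def
    have hn' : ∀ k, 0 ≤ n' k := fun k => pNorm_nonneg' p _ (fun v => hW' v k)
    set W'' : Fin V → Fin K → ℝ :=
      fun v k => if n' k = 0 then W v k else W' v k / n' k with hW''def
    set H'' : Fin K → Fin D → ℝ := fun k d => n' k * H' k d with hH''def
    have hW''nn : ∀ v k, 0 ≤ W'' v k := by
      intro v k; rw [hW''def]; dsimp only
      split
      · exact hW v k
      · exact div_nonneg (hW' v k) (hn' k)
    have hWn'' : ∀ k, pNorm p (fun v => W'' v k) = 1 := by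
      intro k
      by_cases h : n' k = 0
      · simp only [hW''def, if_pos h]; exact hWn k
      · simp only [hW''def, if_neg h]
        exact pNorm_normalize hp _ (fun v => hW' v k)
          (lt_of_le_of_ne (hn' k) (Ne.symm h))
    have hH''nn : ∀ k d, 0 ≤ H'' k d := fun k d => mul_nonneg (hn' k) (hH' k d)
    have hMM : matMul W'' H'' = matMul W' H' := by
      funext v d
      unfold matMul
      refine Finset.sum_congr rfl fun k _ => ?_
      by_cases h : n' k = 0
      · have hz : W' v k = 0 := pNorm_col_zero hp _ (fun v => hW' v k) h v
        simp [hW''def, hH''def, h, hz]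
      · simp only [hW''def, hH''def, if_neg h]
        field_simp
    have hPen : (∑ k, ∑ d, H'' k d ^ q)
        = ∑ k, pNorm p (fun v => W' v k) ^ q * (∑ d, H' k d ^ q) := by
      refine Finset.sum_congr rfl fun k _ => ?_
      rw [Finset.mul_sum]
      exact Finset.sum_congr rfl fun d _ => Real.mul_rpow (hn' k) (hH' k d)
    have hL : (∑ k, pNorm p (fun v => W v k) ^ q * (∑ d, H k d ^ q))
        = ∑ k, ∑ d, H k d ^ q := by
      refine Finset.sum_congr rfl fun k _ => ?_
      rw [hWn k, Real.one_rpow, one_mul]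
    rw [hL]
    calc Dist X (matMul W H) + lam * (∑ k, ∑ d, H k d ^ q)
        ≤ Dist X (matMul W'' H'') + lam * (∑ k, ∑ d, H'' k d ^ q) :=
          hmin W'' H'' hW''nn hWn'' hH''nn
      _ = Dist X (matMul W' H')
          + lam * (∑ k, pNorm p (fun v => W' v k) ^ q * (∑ d, H' k d ^ q)) := by
          rw [hMM, hPen]
  · -- part (ii)
    intro W H hW hH hWpos hmin
    have hnorm : ∀ k, pNorm p (fun v => W v k / pNorm p (fun v' => W v' k)) = 1 :=
      fun k => pNorm_normalize hp _ (fun v => hW v k) (hWpos k)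
    refine ⟨hnorm, ?_⟩
    intro W' H' hW' hWn' hH'
    have hMM : matMul (fun v k => W v k / pNorm p (fun v' => W v' k))
        (fun k d => pNorm p (fun v => W v k) * H k d) = matMul W H := by
      funext v d
      unfold matMul
      refine Finset.sum_congr rfl fun k _ => ?_
      have hn : pNorm p (fun v' => W v' k) ≠ 0 := (hWpos k).ne'
      field_simp
    have hPen : (∑ k, ∑ d, (pNorm p (fun v => W v k) * H k d) ^ q)
        = ∑ k, pNorm p (fun v => W v k) ^ q * (∑ d, H k d ^ q) := by
      refine Finset.sum_congr rfl fun k _ => ?_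
      rw [Finset.mul_sum]
      exact Finset.sum_congr rfl fun d _ =>
        Real.mul_rpow (pNorm_nonneg' p _ (fun v => hW v k)) (hH k d)
    have hR : (∑ k, pNorm p (fun v => W' v k) ^ q * (∑ d, H' k d ^ q))
        = ∑ k, ∑ d, H' k d ^ q := by
      refine Finset.sum_congr rfl fun k _ => ?_
      rw [hWn' k, Real.one_rpow, one_mul]
    calc Dist X (matMul (fun v k => W v k / pNorm p (fun v' => W v' k))
            (fun k d => pNorm p (fun v => W v k) * H k d))
          + lam * (∑ k, ∑ d, (pNorm p (fun v => W v k) * H k d) ^ q)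
        = Dist X (matMul W H)
          + lam * (∑ k, pNorm p (fun v => W v k) ^ q * (∑ d, H k d ^ q)) := by
          rw [hMM, hPen]
      _ ≤ Dist X (matMul W' H')
          + lam * (∑ k, pNorm p (fun v => W' v k) ^ q * (∑ d, H' k d ^ q)) :=
          hmin W' H' hW' hH'
      _ = Dist X (matMul W' H') + lam * (∑ k, ∑ d, H' k d ^ q) := by rw [hR]
end

section
/- Let ψ : ℝ → ℝ be the digamma function, ψ(t) = d/dt log Γ(t) (the derivative of the logarithm of the real Gamma function). Let X ∈ ℝ^{V×D} have strictly positive entries, α ∈ ℝ^K with α_k > 0, a > 0, and let W^{(0)} ∈ ℝ^{V×K} have strictly positive entries with every column in Δ_{V−1} and β^{(0)} ∈ ℝ^{K×D} have strictly positive entries. Define the Gamma–Poisson (GaP) sequence by h̃^{(n)}_{kd} = exp(ψ(β^{(n)}_{kd}))/(1+a), φ^{(n)}_{vkd} = w^{(n)}_{vk} h̃^{(n)}_{kd} / (Σ_{k′} w^{(n)}_{vk′} h̃^{(n)}_{k′d}), w^{(n+1)}_{vk} = (Σ_d x_{vd} φ^{(n)}_{vkd}) / (Σ_{v′,d} x_{v′d}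 φ^{(n)}_{v′kd}), β^{(n+1)}_{kd} = α_k + Σ_v x_{vd} φ^{(n)}_{vkd}; and define the LDA sequence by the same recurrences except h̃^{(n)}_{kd} = exp(ψ(β^{(n)}_{kd}) − ψ(Σ_{k′} β^{(n)}_{k′d})), both from the same initialization (W^{(0)}, β^{(0)}). Then for all n ≥ 1: W^{(n),GaP} = W^{(n),LDA}, β^{(n),GaP} = β^{(n),LDA}, and Σ_k β^{(n)}_{kd} = Σ_k α_k + Σ_v x_{vd} for every d. -/
/-- Normalized responsibilities `φ_{vkd} ∝ w_{vk} h̃_{kd}` (normalized over `k`). -/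
noncomputable def phiOf {V K D : ℕ} (W : Fin V → Fin K → ℝ) (ht : Fin K → Fin D → ℝ)
    (v : Fin V) (k : Fin K) (d : Fin D) : ℝ :=
  (W v k * ht k d) / (∑ k', W v k' * ht k' d)

/-- Variational `W`-update `w_{vk} ∝ ∑_d x_{vd} φ_{vkd}` (normalized over `v`). -/
noncomputable def viW {V K D : ℕ} (X : Fin V → Fin D → ℝ) (W : Fin V → Fin K → ℝ)
    (ht : Fin K → Fin D → ℝ) : Fin V → Fin K → ℝ :=
  fun v k =>
    (∑ d, X v d * phiOf W ht v k d) / (∑ v', ∑ d, X v' d * phiOf W ht v' k d)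

/-- Variational `β`-update `β_{kd} = α_k + ∑_v x_{vd} φ_{vkd}`. -/
noncomputable def viB {V K D : ℕ} (α : Fin K → ℝ) (X : Fin V → Fin D → ℝ)
    (W : Fin V → Fin K → ℝ) (ht : Fin K → Fin D → ℝ) : Fin K → Fin D → ℝ :=
  fun k d => α k + ∑ v, X v d * phiOf W ht v k d

/-- Gamma–Poisson geometric mean of the topic weights:
`h̃_{kd} = exp(ψ(β_{kd})) / (1 + a)`. -/
noncomputable def gapH {K D : ℕ} (ψ : ℝ → ℝ) (a : ℝ) (B : Fin K → Fin D → ℝ) :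
    Fin K → Fin D → ℝ :=
  fun k d => Real.exp (ψ (B k d)) / (1 + a)

/-- LDA geometric mean of the topic proportions:
`h̃_{kd} = exp(ψ(β_{kd}) − ψ(∑_{k'} β_{k'd}))`. -/
noncomputable def ldaH {K D : ℕ} (ψ : ℝ → ℝ) (B : Fin K → Fin D → ℝ) :
    Fin K → Fin D → ℝ :=
  fun k d => Real.exp (ψ (B k d) - ψ (∑ k', B k' d))


lemma phiOf_smul {V K D : ℕ} (W : Fin V → Fin K → ℝ) (e : Fin K → Fin D → ℝ)
    (c : Fin D → ℝ) (hc : ∀ d, c d ≠ 0) :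
    phiOf W (fun k d => c d * e k d) = phiOf W e := by
  funext v k d
  unfold phiOf
  have hs : (∑ k', W v k' * (c d * e k' d)) = c d * ∑ k', W v k' * e k' d := by
    rw [Finset.mul_sum]; exact Finset.sum_congr rfl fun k' _ => by ring
  rw [hs, mul_left_comm, mul_div_mul_left _ _ (hc d)]

lemma phiOf_gap_eq_lda {V K D : ℕ} (W : Fin V → Fin K → ℝ) (ψ : ℝ → ℝ) (a : ℝ)
    (ha : 0 < a) (B : Fin K → Fin D → ℝ) :
    phiOf W (gapH ψ a B) = phiOf W (ldaH ψ B) := by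
  have h1 : gapH ψ a B = fun k d => (1 / (1 + a)) * Real.exp (ψ (B k d)) := by
    funext k d; unfold gapH; ring
  have h2 : ldaH ψ B = fun k d =>
      Real.exp (-(ψ (∑ k', B k' d))) * Real.exp (ψ (B k d)) := by
    funext k d; unfold ldaH; rw [← Real.exp_add]; ring_nf
  rw [h1, h2, phiOf_smul W _ _ (fun d => by positivity),
    phiOf_smul W _ _ (fun d => (Real.exp_pos _).ne')]

lemma phiOf_pos {V K D : ℕ} (hK : 0 < K) (W : Fin V → Fin K → ℝ)
    (ht : Fin K → Fin D → ℝ) (v : Fin V) (k : Fin K) (d : Fin D)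
    (hW : ∀ k, 0 < W v k) (hht : ∀ k, 0 < ht k d) : 0 < phiOf W ht v k d := by
  have : Nonempty (Fin K) := ⟨⟨0, hK⟩⟩
  exact div_pos (mul_pos (hW k) (hht k))
    (Finset.sum_pos (fun k' _ => mul_pos (hW k') (hht k')) Finset.univ_nonempty)

lemma sum_phiOf {V K D : ℕ} (hK : 0 < K) (W : Fin V → Fin K → ℝ)
    (ht : Fin K → Fin D → ℝ) (v : Fin V) (d : Fin D)
    (hW : ∀ k, 0 < W v k) (hht : ∀ k, 0 < ht k d) :
    (∑ k, phiOf W ht v k d) = 1 := by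
  have : Nonempty (Fin K) := ⟨⟨0, hK⟩⟩
  have hS : 0 < ∑ k', W v k' * ht k' d :=
    Finset.sum_pos (fun k' _ => mul_pos (hW k') (hht k')) Finset.univ_nonempty
  unfold phiOf
  rw [← Finset.sum_div, div_self hS.ne']

/-- The variational inference iterates of the Gamma–Poisson NMF model and of LDA
(the Dirichlet–Poisson model), started from the same initialization, coincide for all
`n ≥ 1`, and the column sums of `β^{(n)}` equal `∑_k α_k + ∑_v x_{vd}`. Here `ψ` is the
digamma function, i.e. the derivative of `log ∘ Γ` on `(0, ∞)`. -/
theorem gamma_poisson_lda_iterates {V K D : ℕ} (hK : 0 < K)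
    (ψ : ℝ → ℝ)
    (hψ : ∀ t : ℝ, 0 < t → HasDerivAt (fun s => Real.log (Real.Gamma s)) (ψ t) t)
    (X : Fin V → Fin D → ℝ) (hX : ∀ v d, 0 < X v d)
    (α : Fin K → ℝ) (hα : ∀ k, 0 < α k) (a : ℝ) (ha : 0 < a)
    (W0 : Fin V → Fin K → ℝ) (hW0pos : ∀ v k, 0 < W0 v k)
    (hW0sum : ∀ k, (∑ v, W0 v k) = 1)
    (B0 : Fin K → Fin D → ℝ) (hB0pos : ∀ k d, 0 < B0 k d)
    (WG WL : ℕ → Fin V → Fin K → ℝ) (BG BL : ℕ → Fin K → Fin D → ℝ)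
    (hWG0 : WG 0 = W0) (hBG0 : BG 0 = B0) (hWL0 : WL 0 = W0) (hBL0 : BL 0 = B0)
    (hWGrec : ∀ n, WG (n + 1) = viW X (WG n) (gapH ψ a (BG n)))
    (hBGrec : ∀ n, BG (n + 1) = viB α X (WG n) (gapH ψ a (BG n)))
    (hWLrec : ∀ n, WL (n + 1) = viW X (WL n) (ldaH ψ (BL n)))
    (hBLrec : ∀ n, BL (n + 1) = viB α X (WL n) (ldaH ψ (BL n))) :
    ∀ n, 1 ≤ n →
      WG n = WL n ∧ BG n = BL n ∧
      (∀ d, (∑ k, BG n k d) = (∑ k, α k) + ∑ v, X v d) := by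
  -- Equality of the two sequences holds for all n (shared init + φ-invariance).
  have heq : ∀ n, WG n = WL n ∧ BG n = BL n := by
    intro n
    induction n with
    | zero => exact ⟨hWG0.trans hWL0.symm, hBG0.trans hBL0.symm⟩
    | succ m ih =>
      obtain ⟨hW, hB⟩ := ih
      have hphi : phiOf (WG m) (gapH ψ a (BG m)) = phiOf (WL m) (ldaH ψ (BL m)) := by
        rw [hW, hB]; exact phiOf_gap_eq_lda (WL m) ψ a ha (BL m)
      constructor
      · rw [hWGrec, hWLrec]; unfold viW; rw [hphi]
      · rw [hBGrec, hBLrec]; unfold viB; rw [hphi]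
  -- positivity of gapH
  have hgpos : ∀ n k d, 0 < gapH ψ a (BG n) k d := by
    intro n k d
    exact div_pos (Real.exp_pos _) (by linarith)
  intro n hn
  refine ⟨(heq n).1, (heq n).2, ?_⟩
  intro d
  -- Since a document index d exists, positivity of the W iterates holds.
  have hWpos : ∀ m v k, 0 < WG m v k := by
    intro m
    induction m with
    | zero => simpa [hWG0] using hW0pos
    | succ m ih =>
      intro v k
      rw [hWGrec]
      have hterm : ∀ v', 0 < ∑ d', X v' d' * phiOf (WG m) (gapH ψ a (BG m)) v' k d' := by
        intro v'
        refine Finset.sum_pos (fun d' _ => mul_pos (hX v' d') ?_) ⟨d, Finset.mem_univ d⟩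
        exact phiOf_pos hK _ _ v' k d' (fun k' => ih v' k') (fun k' => hgpos m k' d')
      exact div_pos (hterm v)
        (Finset.sum_pos (fun v' _ => hterm v') ⟨v, Finset.mem_univ v⟩)
  obtain ⟨m, rfl⟩ : ∃ m, n = m + 1 := ⟨n - 1, (Nat.succ_pred_eq_of_pos hn).symm⟩
  rw [hBGrec]
  unfold viB
  rw [Finset.sum_add_distrib, Finset.sum_comm]
  congr 1
  rw [show (∑ v, X v d) = ∑ v, X v d * 1 by simp]
  refine Finset.sum_congr rfl fun v _ => ?_
  rw [← Finset.mul_sum,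
    sum_phiOf hK _ _ v d (fun k' => hWpos m v k') (fun k' => hgpos m k' d)]
end
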